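/- arXiv:1605.00863 — 3 statements merged into one kernel-verified Lean document; each statement's English description precedes it below -/
import Mathlib

section
/- Let k, d ≥ 2, let Δ = k + 1, and let H be built by the 2-step method from the connected (d,Δ)-bipartite graph H0 using a [Δ,k]-transversal design T. Let Q and Q' be distinct blocks of H0 that have exactly one common neighbour p_1 in H0, and suppose that there is a path in H0 from Q to Q' of length at most μ that avoids p_1. Then for any block B_{Q,V} ∈ B_Q of H and any block B_{Q',V'} ∈ B_{Q'} of H there are Δ = k + 1 pairwise internally-disjoint paths in H from B_{Q,V} to B_{Q',V'}, of which k have length at most 6 and the remaining path has length at most μ. -/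
/-- The bipartite graph on `ν ⊕ β` (nodes on the left, blocks on the right)
determined by the adjacency relation `adj`. -/
def bipGraph {ν β : Type} (adj : ν → β → Prop) : SimpleGraph (ν ⊕ β) :=
  SimpleGraph.fromRel fun u v => ∃ x b, u = Sum.inl x ∧ v = Sum.inr b ∧ adj x b

/-- A `[Δ,k]`-transversal design: the nodes form a set of size `Δ * k` partitioned
into `Δ` groups (the fibres of `group`), each of size `k`; there are `k ^ 2` blocks;
every block is adjacent to exactly one node of each group; and every pair of nodes
lying in distinct groups is adjacent to exactly one common block (the block
*generated* by the pair). -/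
structure IsTransversalDesign {ν β : Type} (Δ k : ℕ)
    (group : ν → Fin Δ) (adj : ν → β → Prop) : Prop where
  two_le_k : 2 ≤ k
  two_le_Δ : 2 ≤ Δ
  groupCard : ∀ i : Fin Δ, Nat.card {x : ν // group x = i} = k
  blockCard : Nat.card β = k ^ 2
  blockMeets : ∀ (b : β) (i : Fin Δ), ∃! x : ν, group x = i ∧ adj x b
  pairGen : ∀ x y : ν, group x ≠ group y → ∃! b : β, adj x b ∧ adj y b

/-- A family of walks (with sources `s i` and destinations `t i`) is pairwise
internally-disjoint if every vertex which is a source or destination of some member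
of the family appears on members of the family only as their source or destination,
and every vertex which is not a source or destination of any member of the family
lies on at most one member of the family. -/
def PairwiseInternallyDisjoint {V ι : Type} {G : SimpleGraph V} {s t : ι → V}
    (p : (i : ι) → G.Walk (s i) (t i)) : Prop :=
  (∀ i j : ι, ∀ v : V, v ∈ (p i).support → (v = s j ∨ v = t j) → v = s i ∨ v = t i) ∧
  (∀ i j : ι, ∀ v : V, (∀ l : ι, v ≠ s l ∧ v ≠ t l) →
    v ∈ (p i).support → v ∈ (p j).support → i = j)

/-- A family of walks is pairwise edge-disjoint if every edge lies on at most one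
member of the family. -/
def PairwiseEdgeDisjoint {V ι : Type} {G : SimpleGraph V} {s t : ι → V}
    (p : (i : ι) → G.Walk (s i) (t i)) : Prop :=
  ∀ i j : ι, ∀ e : Sym2 V, e ∈ (p i).edges → e ∈ (p j).edges → i = j

/-- A `(d,Δ)`-bipartite graph: every node has degree `d` and every block has
degree (rank) `Δ`. -/
def IsBipartiteDegRank {ν β : Type} (d Δ : ℕ) (adj : ν → β → Prop) : Prop :=
  (∀ x : ν, Nat.card {b : β // adj x b} = d) ∧
  (∀ b : β, Nat.card {x : ν // adj x b} = Δ)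

/-- The bipartite graph determined by `adj` has line-diameter `l`: the maximum,
over pairs of distinct blocks, of the distance between the two blocks is `l`. -/
def HasLineDiam {ν β : Type} (adj : ν → β → Prop) (l : ℕ) : Prop :=
  (∀ b b' : β, b ≠ b' → (bipGraph adj).dist (Sum.inr b) (Sum.inr b') ≤ l) ∧
  (∃ b b' : β, b ≠ b' ∧ (bipGraph adj).dist (Sum.inr b) (Sum.inr b') = l)

/-- `adjH` describes the bipartite graph `H` built by the 2-step method from the
bipartite graph `H0` (given by `adj0`) and the `[Δ,k]`-transversal design `T`
(given by `groupT`, `adjT`): the nodes of `H` are the pairs `(p, j)` for `p` a node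
of `H0` and `j : Fin k` (so the group `G_p` is `{p} × Fin k`), the blocks of `H`
are the pairs `(Q, b)` for `Q` a block of `H0` and `b` a block of `T` (so the set
`B_Q` is `{Q} × βT`, and such sets are automatically pairwise disjoint, as are the
edge sets of the copies `T_Q`), a node `(p, j)` is adjacent in `H` to a block
`(Q, b)` only if `p` is adjacent to `Q` in `H0`, and for every block `Q` of `H0`
the nodes of the groups `G_p`, for `p` a neighbour of `Q` in `H0`, together with
the blocks of `B_Q` form a copy `T_Q` of `T` whose `Δ` groups are these groups. -/
structure TwoStep {ν0 β0 νT βT : Type} (Δ k : ℕ)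
    (adj0 : ν0 → β0 → Prop) (groupT : νT → Fin Δ) (adjT : νT → βT → Prop)
    (adjH : ν0 × Fin k → β0 × βT → Prop) : Prop where
  td : IsTransversalDesign Δ k groupT adjT
  supp : ∀ (x : ν0 × Fin k) (Q : β0) (b : βT), adjH x (Q, b) → adj0 x.1 Q
  copy : ∀ Q : β0, ∃ (enum : Fin Δ → ν0) (f : νT ≃ {x : ν0 × Fin k // adj0 x.1 Q})
      (g : βT ≃ βT),
    Function.Injective enum ∧ (∀ i : Fin Δ, adj0 (enum i) Q) ∧
    (∀ q : ν0, adj0 q Q → ∃ i : Fin Δ, enum i = q) ∧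
    (∀ x : νT, ((f x : ν0 × Fin k).1 = enum (groupT x))) ∧
    (∀ (x : νT) (b : βT), adjT x b ↔ adjH (f x : ν0 × Fin k) (Q, g b))

/-!
The `k + 1` paths are one long path and `k` short ones. The long path lifts the given path
`Q, q₁, …, qₘ, Q'` of `H0` to `H`: a node `x` of `H0` is replaced by one node `(x, sel x)` of its
group, and each block between two consecutive nodes by the block of `H` they generate. The `j`-th
short path runs inside the two copies `T_Q` and `T_{Q'}` through the node `(p₁, j)`: from `(Q, V)`
to `(p₁, j)` it passes through the node of `(Q, V)` in the group of some neighbour `x ≠ q₁` of `Q`,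
distinct neighbours for distinct `j`, and symmetrically on the side of `Q'`. Since `p₁` is the only
common neighbour of `Q` and `Q'`, the short paths meet only at their ends, and choosing `sel x`
off `(Q, V)` and `(Q', V')` (except at `q₁` and `qₘ`) keeps the long path away from them.
-/

open SimpleGraph Sum

section BipGraph

variable {ν β : Type} {adj : ν → β → Prop}

@[simp]
lemma bipGraph_adj_inl_inr {x : ν} {b : β} :
    (bipGraph adj).Adj (inl x) (inr b) ↔ adj x b := by
  simp [bipGraph]

@[simp]
lemma bipGraph_adj_inr_inl {x : ν} {b : β} :
    (bipGraph adj).Adj (inr b) (inl x) ↔ adj x b := by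
  simp [bipGraph]

@[simp]
lemma bipGraph_not_adj_inl_inl {x y : ν} : ¬(bipGraph adj).Adj (inl x) (inl y) := by
  simp [bipGraph]

@[simp]
lemma bipGraph_not_adj_inr_inr {b c : β} : ¬(bipGraph adj).Adj (inr b) (inr c) := by
  simp [bipGraph]

lemma bipGraph.exists_eq_cons_concat {Q Q' : β} (hQQ : Q ≠ Q')
    (w : (bipGraph adj).Walk (inr Q) (inr Q')) :
    ∃ (q₁ qₘ : ν) (h₁ : (bipGraph adj).Adj (inr Q) (inl q₁))
      (r : (bipGraph adj).Walk (inl q₁) (inl qₘ)) (hₘ : (bipGraph adj).Adj (inl qₘ) (inr Q')),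
      w = .cons h₁ (r.concat hₘ) := by
  cases w with
  | nil => exact absurd rfl hQQ
  | @cons _ v _ h₁ w' =>
    rcases v with q₁ | b
    · cases w' with
      | cons h w'' =>
        obtain ⟨x, r, hₘ, hr⟩ := Walk.exists_cons_eq_concat h w''
        rcases x with qₘ | b
        · exact ⟨q₁, qₘ, h₁, r, hₘ, by rw [hr]⟩
        · simp at hₘ
    · simp at h₁

end BipGraph

lemma SimpleGraph.Walk.IsPath.append {V : Type} {G : SimpleGraph V} {u v w : V}
    {p : G.Walk u v} {q : G.Walk v w} (hp : p.IsPath) (hq : q.IsPath)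
    (h : ∀ x ∈ p.support, x ∈ q.support → x = v) : (p.append q).IsPath := by
  have hq' := hq.support_nodup
  rw [← q.cons_tail_support, List.nodup_cons] at hq'
  rw [Walk.isPath_def, Walk.support_append, List.nodup_append]
  refine ⟨hp.support_nodup, hq'.2, fun x hx y hy hxy => ?_⟩
  subst hxy
  exact hq'.1 (h x hx (List.mem_of_mem_tail hy) ▸ hy)

lemma pairwiseInternallyDisjoint_vecCons {V : Type} {G : SimpleGraph V} {s t : V} {n : ℕ}
    {p : G.Walk s t} {q : Fin n → G.Walk s t}
    (hq : ∀ i j v, v ∈ (q i).support → v ∈ (q j).support → v ≠ s → v ≠ t → i = j)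
    (hpq : ∀ j, ∀ v ∈ p.support, v ∈ (q j).support → v = s ∨ v = t) :
    PairwiseInternallyDisjoint (Matrix.vecCons p q) := by
  refine ⟨fun _ _ _ _ h => h, fun i j v hv hi hj => ?_⟩
  obtain ⟨hs, ht⟩ := hv i
  induction i using Fin.cases <;> induction j using Fin.cases <;>
    simp only [Matrix.cons_val_zero, Matrix.cons_val_succ] at hi hj
  · rfl
  · exact ((hpq _ v hi hj).elim hs ht).elim
  · exact ((hpq _ v hj hi).elim hs ht).elim
  · rw [hq _ _ v hi hj hs ht]

lemma Set.exists_injective_fin_of_lt_ncard {ν : Type} {s : Set ν} {k : ℕ} (hs : k + 1 ≤ s.ncard)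
    {a b : ν} (ha : a ∈ s) (hb : b ∈ s) (hab : a ≠ b) (j₀ : Fin k) :
    ∃ f : Fin k → ν, Function.Injective f ∧ f j₀ = a ∧ ∀ j, f j ∈ s ∧ f j ≠ b := by
  classical
  have ht : k ≤ Nat.card ↥(s \ {b}) := by
    rw [Nat.card_coe_set_eq, Set.ncard_sdiff_singleton_of_mem hb]
    omega
  have := (Set.finite_of_ncard_pos (by omega : 0 < s.ncard)).sdiff (t := {b}) |>.to_subtype
  let e : Fin k ↪ ↥(s \ {b}) := (Fin.castLEEmb ht).trans (Finite.equivFin _).symm.toEmbedding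
  let g := e.trans (Equiv.swap (e j₀) ⟨a, ha, hab⟩).toEmbedding
  exact ⟨fun j => g j, Subtype.val_injective.comp g.injective, by simp [g],
    fun j => ⟨(g j).2.1, (g j).2.2⟩⟩

section Lift

variable {ν0 β0 ι βT : Type} {adj0 : ν0 → β0 → Prop} {adjH : ν0 × ι → β0 × βT → Prop}

lemma exists_lift_walk (sel : ν0 → ι)
    (hgen : ∀ u a b, adj0 a u → adj0 b u → a ≠ b →
      ∃ c, adjH (a, sel a) (u, c) ∧ adjH (b, sel b) (u, c))
    {a b : ν0} (r : (bipGraph adj0).Walk (inl a) (inl b)) (hr : r.support.Nodup) :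
    ∃ r' : (bipGraph adjH).Walk (inl (a, sel a)) (inl (b, sel b)),
      r'.support.map (Sum.map Prod.fst Prod.fst) = r.support ∧
      ∀ x j, inl (x, j) ∈ r'.support → j = sel x := by
  induction hn : r.length using Nat.strong_induction_on generalizing a r with
  | _ n ih =>
  cases r with
  | nil => exact ⟨.nil, by simp, by simp⟩
  | @cons _ v _ h r₁ =>
    rcases v with _ | u
    · simp at h
    cases r₁ with
    | @cons _ v _ h' r₂ =>
      rcases v with q | _
      swap
      · simp at h'
      simp only [Walk.support_cons, List.nodup_cons, List.mem_cons, reduceCtorEq,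
        false_or] at hr
      obtain ⟨r₂', hmap, hsel⟩ :=
        ih r₂.length (by simp only [Walk.length_cons] at hn; omega) r₂ hr.2.2 rfl
      have hne : a ≠ q := fun h => hr.1 (h ▸ r₂.start_mem_support)
      obtain ⟨c, hc, hc'⟩ := hgen u a q (by simpa using h) (by simpa using h') hne
      refine ⟨.cons (bipGraph_adj_inl_inr.2 hc) (.cons (bipGraph_adj_inr_inl.2 hc') r₂'),
        by simp [hmap], ?_⟩
      simp only [Walk.support_cons, List.mem_cons, inl.injEq, Prod.mk.injEq, reduceCtorEq,
        false_or]
      rintro x j (⟨rfl, rfl⟩ | h)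
      · rfl
      · exact hsel x j h

lemma exists_lift_path (sel : ν0 → ι)
    (hgen : ∀ u a b, adj0 a u → adj0 b u → a ≠ b →
      ∃ c, adjH (a, sel a) (u, c) ∧ adjH (b, sel b) (u, c))
    {Q Q' : β0} {q₁ qₘ : ν0} {h₁ : (bipGraph adj0).Adj (inr Q) (inl q₁)}
    {r : (bipGraph adj0).Walk (inl q₁) (inl qₘ)} {hₘ : (bipGraph adj0).Adj (inl qₘ) (inr Q')}
    (hw : (Walk.cons h₁ (r.concat hₘ)).IsPath) {V V' : βT}
    (hV : adjH (q₁, sel q₁) (Q, V)) (hV' : adjH (qₘ, sel qₘ) (Q', V')) :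
    ∃ P : (bipGraph adjH).Walk (inr (Q, V)) (inr (Q', V')),
      P.IsPath ∧ P.length = (Walk.cons h₁ (r.concat hₘ)).length ∧
      ∀ v ∈ P.support, v ≠ inr (Q, V) → v ≠ inr (Q', V') →
        (∃ x, inl x ∈ r.support ∧ v = inl (x, sel x)) ∨
        ∃ u c, u ≠ Q ∧ u ≠ Q' ∧ v = inr (u, c) := by
  have hnd := hw.support_nodup
  simp only [Walk.support_cons, Walk.support_concat, List.nodup_cons, List.nodup_append,
    List.mem_append, List.mem_singleton, not_or] at hnd
  obtain ⟨⟨hQ, -⟩, hr, -, hQ'⟩ := hnd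
  obtain ⟨r', hmap, hsel⟩ := exists_lift_walk sel hgen r hr
  let P := Walk.cons (bipGraph_adj_inr_inl.2 hV) (r'.concat (bipGraph_adj_inl_inr.2 hV'))
  have hPmap : P.support.map (Sum.map Prod.fst Prod.fst) = (Walk.cons h₁ (r.concat hₘ)).support :=
    by simp [P, hmap]
  have hlen : r'.length = r.length := by
    simpa [Walk.length_support] using congrArg List.length hmap
  refine ⟨P, ?_, by simp [P, hlen], ?_⟩
  · exact (Walk.isPath_def _).2 (List.Nodup.of_map _ (hPmap ▸ hw.support_nodup))
  · intro v hv hvs hvt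
    simp only [P, Walk.support_cons, Walk.support_concat, List.mem_cons, List.mem_append,
      List.not_mem_nil, or_false] at hv
    rcases hv with rfl | hv | rfl
    · exact absurd rfl hvs
    swap
    · exact absurd rfl hvt
    have hproj : Sum.map Prod.fst Prod.fst v ∈ r.support := hmap ▸ List.mem_map_of_mem hv
    rcases v with ⟨x, j⟩ | ⟨u, c⟩
    · exact .inl ⟨x, hproj, by rw [hsel x j hv]⟩
    · refine .inr ⟨u, c, ?_, ?_, rfl⟩ <;> rintro rfl
      exacts [hQ hproj, hQ' _ hproj _ rfl rfl]

end Lift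

namespace TwoStep

variable {ν0 β0 νT βT : Type} {Δ k : ℕ} {adj0 : ν0 → β0 → Prop} {groupT : νT → Fin Δ}
  {adjT : νT → βT → Prop} {adjH : ν0 × Fin k → β0 × βT → Prop}
  (h2 : TwoStep Δ k adj0 groupT adjT adjH)
include h2

lemma existsUnique_adj {Q : β0} {q : ν0} (hq : adj0 q Q) (b : βT) :
    ∃! j, adjH (q, j) (Q, b) := by
  obtain ⟨enum, f, g, henum, -, hsurj, hgroup, hadj⟩ := h2.copy Q
  obtain ⟨i, rfl⟩ := hsurj q hq
  obtain ⟨x, ⟨hxi, hxb⟩, hxu⟩ := h2.td.blockMeets (g.symm b) i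
  have hfx : (f x : ν0 × Fin k) = (enum i, (f x).1.2) := Prod.ext (by rw [hgroup, hxi]) rfl
  refine ⟨(f x).1.2, ?_, fun j hj => ?_⟩
  · change adjH (enum i, _) (Q, b)
    rw [← hfx]
    simpa using (hadj x _).1 hxb
  · let y := f.symm ⟨(enum i, j), hq⟩
    have hfy : (f y : ν0 × Fin k) = (enum i, j) := by simp [y]
    have hyi : groupT y = i := henum (by rw [← hgroup, hfy])
    have hyx : y = x := hxu y ⟨hyi, (hadj y _).2 (by simpa [hfy] using hj)⟩
    rw [← hyx, hfy]

lemma existsUnique_adj_and_adj {Q : β0} {q q' : ν0} (hq : adj0 q Q) (hq' : adj0 q' Q)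
    (hne : q ≠ q') (j j' : Fin k) :
    ∃! b, adjH (q, j) (Q, b) ∧ adjH (q', j') (Q, b) := by
  obtain ⟨enum, f, g, -, -, -, hgroup, hadj⟩ := h2.copy Q
  let x := f.symm ⟨(q, j), hq⟩
  let y := f.symm ⟨(q', j'), hq'⟩
  have hfx : (f x : ν0 × Fin k) = (q, j) := by simp [x]
  have hfy : (f y : ν0 × Fin k) = (q', j') := by simp [y]
  have hxy : groupT x ≠ groupT y := fun h => hne (by
    have hx := hgroup x
    have hy := hgroup y
    rw [hfx] at hx
    rw [hfy, ← h] at hy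
    exact hx.trans hy.symm)
  obtain ⟨b, ⟨hxb, hyb⟩, hbu⟩ := h2.td.pairGen x y hxy
  refine ⟨g b, ⟨by simpa [hfx] using (hadj x b).1 hxb, by simpa [hfy] using (hadj y b).1 hyb⟩,
    fun c ⟨hc, hc'⟩ => ?_⟩
  rw [← g.apply_symm_apply c, hbu (g.symm c) ⟨(hadj x _).2 (by simpa [hfx] using hc),
    (hadj y _).2 (by simpa [hfy] using hc')⟩]

lemma eq_of_adj_of_adj {x : ν0} {Q : β0} {b : βT} {j j' : Fin k}
    (hj : adjH (x, j) (Q, b)) (hj' : adjH (x, j') (Q, b)) : j = j' :=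
  (h2.existsUnique_adj (h2.supp _ _ _ hj) b).unique hj hj'

lemma exists_not_adj (x : ν0) (Q : β0) (b : βT) : ∃ j, ¬adjH (x, j) (Q, b) := by
  have : Nontrivial (Fin k) := Fin.nontrivial_iff_two_le.2 h2.td.two_le_k
  by_contra! h
  obtain ⟨j, j', hjj'⟩ := exists_pair_ne (Fin k)
  exact hjj' (h2.eq_of_adj_of_adj (h j) (h j'))

lemma exists_not_adj_and_not_adj {x : ν0} {Q Q' : β0} (hx : ¬(adj0 x Q ∧ adj0 x Q'))
    (V V' : βT) : ∃ j, ¬adjH (x, j) (Q, V) ∧ ¬adjH (x, j) (Q', V') := by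
  by_cases hQ : adj0 x Q
  · obtain ⟨j, hj⟩ := h2.exists_not_adj x Q V
    exact ⟨j, hj, fun h => hx ⟨hQ, h2.supp _ _ _ h⟩⟩
  · obtain ⟨j, hj⟩ := h2.exists_not_adj x Q' V'
    exact ⟨j, fun h => hQ (h2.supp _ _ _ h), hj⟩

lemma exists_selection {Q Q' : β0} {p₁ q₁ qₘ : ν0}
    (huniq : ∀ q, adj0 q Q → adj0 q Q' → q = p₁) (hq₁ : adj0 q₁ Q) (hqₘ : adj0 qₘ Q')
    (hq₁p : q₁ ≠ p₁) (hqₘp : qₘ ≠ p₁) (V V' : βT) :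
    ∃ sel : ν0 → Fin k, adjH (q₁, sel q₁) (Q, V) ∧ adjH (qₘ, sel qₘ) (Q', V') ∧
      ∀ x ≠ p₁, (adjH (x, sel x) (Q, V) → x = q₁) ∧ (adjH (x, sel x) (Q', V') → x = qₘ) := by
  have hboth : ∀ x ≠ p₁, ¬(adj0 x Q ∧ adj0 x Q') := fun x hx h => hx (huniq x h.1 h.2)
  have hpt : ∀ x, ∃ j, (x = q₁ → adjH (x, j) (Q, V)) ∧ (x = qₘ → adjH (x, j) (Q', V')) ∧
      (x ≠ p₁ → (adjH (x, j) (Q, V) → x = q₁) ∧ (adjH (x, j) (Q', V') → x = qₘ)) := by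
    intro x
    by_cases h₁ : x = q₁
    · subst h₁
      obtain ⟨j, hj, -⟩ := h2.existsUnique_adj hq₁ V
      exact ⟨j, fun _ => hj, fun h => (hboth x hq₁p ⟨hq₁, h ▸ hqₘ⟩).elim,
        fun _ => ⟨fun _ => rfl, fun h => (hboth x hq₁p ⟨hq₁, h2.supp _ _ _ h⟩).elim⟩⟩
    by_cases hₘ : x = qₘ
    · subst hₘ
      obtain ⟨j, hj, -⟩ := h2.existsUnique_adj hqₘ V'
      exact ⟨j, fun h => absurd h h₁, fun _ => hj,
        fun _ => ⟨fun h => (hboth x hqₘp ⟨h2.supp _ _ _ h, hqₘ⟩).elim, fun _ => rfl⟩⟩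
    obtain ⟨j, hj⟩ : ∃ j, x ≠ p₁ → ¬adjH (x, j) (Q, V) ∧ ¬adjH (x, j) (Q', V') := by
      by_cases hx : x = p₁
      · obtain ⟨j, -⟩ := h2.exists_not_adj x Q V
        exact ⟨j, fun h => absurd hx h⟩
      · obtain ⟨j, hj⟩ := h2.exists_not_adj_and_not_adj (hboth x hx) V V'
        exact ⟨j, fun _ => hj⟩
    exact ⟨j, fun h => absurd h h₁, fun h => absurd h hₘ,
      fun hx => ⟨fun h => absurd h (hj hx).1, fun h => absurd h (hj hx).2⟩⟩
  choose sel hsel using hpt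
  exact ⟨sel, (hsel q₁).1 rfl, (hsel qₘ).2.1 rfl, fun x hx => (hsel x).2.2 hx⟩

lemma exists_path_via_group {Q : β0} {x p : ν0} (hx : adj0 x Q) (hp : adj0 p Q) (V : βT)
    (j : Fin k) (hxp : ¬adjH (p, j) (Q, V) → x ≠ p) :
    ∃ P : (bipGraph adjH).Walk (inr (Q, V)) (inl (p, j)), P.IsPath ∧ P.length ≤ 3 ∧
      ∀ v ∈ P.support, v = inr (Q, V) ∨ v = inl (p, j) ∨
        (∃ y, adjH (x, y) (Q, V) ∧ v = inl (x, y)) ∨ ∃ c, adjH (p, j) (Q, c) ∧ v = inr (Q, c) := by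
  by_cases hj : adjH (p, j) (Q, V)
  · refine ⟨.cons (bipGraph_adj_inr_inl.2 hj) .nil, by simp, by simp, ?_⟩
    simp
  obtain ⟨y, hy, -⟩ := h2.existsUnique_adj hx V
  obtain ⟨c, ⟨hyc, hjc⟩, -⟩ := h2.existsUnique_adj_and_adj hx hp (hxp hj) y j
  have hVc : V ≠ c := by
    rintro rfl
    exact hj hjc
  let P : (bipGraph adjH).Walk (inr (Q, V)) (inl (p, j)) :=
    .cons (bipGraph_adj_inr_inl.2 hy) (.cons (bipGraph_adj_inl_inr.2 hyc)
      (.cons (bipGraph_adj_inr_inl.2 hjc) .nil))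
  refine ⟨P, ?_, by simp [P], ?_⟩
  · rw [Walk.isPath_def]
    simp [P, hVc, hxp hj]
  · simp only [P, Walk.support_cons, Walk.support_nil, List.mem_cons, List.not_mem_nil, or_false]
    rintro v (rfl | rfl | rfl | rfl)
    exacts [.inl rfl, .inr (.inr (.inl ⟨y, hy, rfl⟩)), .inr (.inr (.inr ⟨c, hjc, rfl⟩)),
      .inr (.inl rfl)]

lemma exists_fan {Q : β0} {p q : ν0} (hrank : k + 1 ≤ Nat.card {x // adj0 x Q})
    (hp : adj0 p Q) (hq : adj0 q Q) (hpq : p ≠ q) (V : βT) :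
    ∃ L : (j : Fin k) → (bipGraph adjH).Walk (inr (Q, V)) (inl (p, j)),
      (∀ j, (L j).IsPath ∧ (L j).length ≤ 3) ∧
      (∀ i j v, v ∈ (L i).support → v ∈ (L j).support → v ≠ inr (Q, V) → i = j) ∧
      ∀ j, ∀ v ∈ (L j).support, (∃ c, v = inr (Q, c)) ∨ v = inl (p, j) ∨
        ∃ x y, x ≠ p ∧ x ≠ q ∧ adjH (x, y) (Q, V) ∧ v = inl (x, y) := by
  obtain ⟨jA, hjA, -⟩ := h2.existsUnique_adj hp V
  obtain ⟨ex, hinj, hexA, hex⟩ :=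
    Set.exists_injective_fin_of_lt_ncard (s := {x | adj0 x Q}) hrank hp hq hpq jA
  have hexp : ∀ j, ex j = p → j = jA := fun j h => hinj (h.trans hexA.symm)
  have hpA : ∀ a y, ex a = p → adjH (ex a, y) (Q, V) → a = jA ∧ y = jA := fun a y ha hy =>
    ⟨hexp a ha, h2.eq_of_adj_of_adj (ha ▸ hy) hjA⟩
  -- `L j` passes through the group of `ex j`, except `L jA`, the edge from `(Q, V)` to `(p, jA)`
  choose L hLpath hLlen hLv using fun j =>
    h2.exists_path_via_group (hex j).1 hp V j fun hj h => hj (hexp j h ▸ hjA)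
  refine ⟨L, fun j => ⟨hLpath j, hLlen j⟩, ?_, ?_⟩
  · intro i j v hi hj hv
    rcases hLv i v hi with rfl | rfl | ⟨y, hy, rfl⟩ | ⟨c, hc, rfl⟩ <;>
      rcases hLv j _ hj with h | h | ⟨y', hy', h⟩ | ⟨c', hc', h⟩ <;>
      simp only [reduceCtorEq, inl.injEq, inr.injEq, Prod.mk.injEq, ne_eq,
        not_true_eq_false, true_and] at h hv ⊢
    · exact h
    · obtain ⟨hj, hy'⟩ := hpA j y' h.1.symm hy'
      rw [h.2, hy', hj]
    · obtain ⟨hi, hy⟩ := hpA i y h.1 hy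
      rw [hi, ← hy, h.2]
    · exact hinj h.1
    · exact absurd h hv
    · exact h2.eq_of_adj_of_adj hc (h ▸ hc')
  · intro j v hv
    rcases hLv j v hv with rfl | rfl | ⟨y, hy, rfl⟩ | ⟨c, -, rfl⟩
    · exact .inl ⟨V, rfl⟩
    · exact .inr (.inl rfl)
    · by_cases hxp : ex j = p
      · obtain ⟨rfl, rfl⟩ := hpA j y hxp hy
        exact .inr (.inl (by rw [hxp]))
      · exact .inr (.inr ⟨ex j, y, hxp, (hex j).2, hy, rfl⟩)
    · exact .inl ⟨c, rfl⟩

lemma exists_short_paths {Q Q' : β0} {p₁ q₁ qₘ : ν0} (hQQ : Q ≠ Q')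
    (huniq : ∀ q, adj0 q Q → adj0 q Q' → q = p₁)
    (hrank : k + 1 ≤ Nat.card {x // adj0 x Q}) (hrank' : k + 1 ≤ Nat.card {x // adj0 x Q'})
    (hp₁ : adj0 p₁ Q) (hp₁' : adj0 p₁ Q') (hq₁ : adj0 q₁ Q) (hqₘ : adj0 qₘ Q')
    (hq₁p : q₁ ≠ p₁) (hqₘp : qₘ ≠ p₁) (V V' : βT) :
    ∃ S : Fin k → (bipGraph adjH).Walk (inr (Q, V)) (inr (Q', V')),
      (∀ j, (S j).IsPath ∧ (S j).length ≤ 6) ∧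
      (∀ i j v, v ∈ (S i).support → v ∈ (S j).support → v ≠ inr (Q, V) → v ≠ inr (Q', V') →
        i = j) ∧
      ∀ j, ∀ v ∈ (S j).support, (∃ c, v = inr (Q, c) ∨ v = inr (Q', c)) ∨ v = inl (p₁, j) ∨
        ∃ x y, x ≠ p₁ ∧ ((x ≠ q₁ ∧ adjH (x, y) (Q, V)) ∨ (x ≠ qₘ ∧ adjH (x, y) (Q', V'))) ∧
          v = inl (x, y) := by
  obtain ⟨L, hL, hLdisj, hLv⟩ := h2.exists_fan hrank hp₁ hq₁ hq₁p.symm V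
  obtain ⟨R, hR, hRdisj, hRv⟩ := h2.exists_fan hrank' hp₁' hqₘ hqₘp.symm V'
  have hLR : ∀ i j v, v ∈ (L i).support → v ∈ (R j).support →
      v = inl (p₁, i) ∧ v = inl (p₁, j) := by
    intro i j v hi hj
    rcases hLv i v hi with ⟨c, rfl⟩ | rfl | ⟨x, y, hx, -, hxy, rfl⟩ <;>
      rcases hRv j _ hj with ⟨c', h⟩ | h | ⟨x', y', hx', -, hxy', h⟩ <;>
      simp only [reduceCtorEq, inl.injEq, inr.injEq, Prod.mk.injEq] at h
    · exact absurd h.1 hQQ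
    · exact ⟨rfl, by rw [h.2]⟩
    · exact absurd h.1.symm hx'
    · exact absurd h.1 hx
    · obtain ⟨rfl, rfl⟩ := h
      exact absurd (huniq x (h2.supp _ _ _ hxy) (h2.supp _ _ _ hxy')) hx
  refine ⟨fun j => (L j).append (R j).reverse, fun j => ⟨?_, ?_⟩, ?_, ?_⟩
  · refine (hL j).1.append (hR j).1.reverse fun v hv hv' => (hLR j j v hv ?_).1
    simpa using hv'
  · simp only [Walk.length_append, Walk.length_reverse]
    linarith [(hL j).2, (hR j).2]
  · intro i j v hi hj hv hv'
    simp only [Walk.mem_support_append_iff, Walk.support_reverse, List.mem_reverse] at hi hj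
    rcases hi with hi | hi <;> rcases hj with hj | hj
    · exact hLdisj i j v hi hj hv
    · simpa using (hLR i j v hi hj).1.symm.trans (hLR i j v hi hj).2
    · simpa using (hLR j i v hj hi).2.symm.trans (hLR j i v hj hi).1
    · exact hRdisj i j v hi hj hv'
  · intro j v hv
    simp only [Walk.mem_support_append_iff, Walk.support_reverse, List.mem_reverse] at hv
    rcases hv with hv | hv
    · rcases hLv j v hv with ⟨c, rfl⟩ | rfl | ⟨x, y, hx, hxq, hxy, rfl⟩
      exacts [.inl ⟨c, .inl rfl⟩, .inr (.inl rfl), .inr (.inr ⟨x, y, hx, .inl ⟨hxq, hxy⟩, rfl⟩)]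
    · rcases hRv j v hv with ⟨c, rfl⟩ | rfl | ⟨x, y, hx, hxq, hxy, rfl⟩
      exacts [.inl ⟨c, .inr rfl⟩, .inr (.inl rfl), .inr (.inr ⟨x, y, hx, .inr ⟨hxq, hxy⟩, rfl⟩)]

end TwoStep

theorem twoStep_one_to_one_excess_one_common_general {ν0 β0 νT βT : Type} (d k μ : ℕ)
    (adj0 : ν0 → β0 → Prop) (groupT : νT → Fin (k + 1)) (adjT : νT → βT → Prop)
    (adjH : ν0 × Fin k → β0 × βT → Prop)
    (hH0 : IsBipartiteDegRank d (k + 1) adj0)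
    (h2 : TwoStep (k + 1) k adj0 groupT adjT adjH)
    (Q Q' : β0) (hQQ : Q ≠ Q')
    (p1 : ν0) (hp1 : adj0 p1 Q) (hp1' : adj0 p1 Q')
    (huniq : ∀ q : ν0, adj0 q Q → adj0 q Q' → q = p1)
    (w : (bipGraph adj0).Walk (Sum.inr Q) (Sum.inr Q'))
    (hw : w.IsPath) (hwlen : w.length ≤ μ) (hwavoid : Sum.inl p1 ∉ w.support)
    (V V' : βT) :
    ∃ p : Fin (k + 1) → (bipGraph adjH).Walk (Sum.inr (Q, V)) (Sum.inr (Q', V')),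
      (∀ i, (p i).IsPath) ∧ PairwiseInternallyDisjoint p ∧
      ∃ i0 : Fin (k + 1),
        (∀ i : Fin (k + 1), i ≠ i0 → (p i).length ≤ 6) ∧ (p i0).length ≤ μ := by
  obtain ⟨q₁, qₘ, h₁, r, hₘ, rfl⟩ := bipGraph.exists_eq_cons_concat hQQ w
  have hq₁ : adj0 q₁ Q := bipGraph_adj_inr_inl.1 h₁
  have hqₘ : adj0 qₘ Q' := bipGraph_adj_inl_inr.1 hₘ
  have hq₁p : q₁ ≠ p1 := fun h => hwavoid (by simp [← h])
  have hqₘp : qₘ ≠ p1 := fun h => hwavoid (by simp [← h])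
  obtain ⟨sel, hsel₁, hselₘ, hsel⟩ := h2.exists_selection huniq hq₁ hqₘ hq₁p hqₘp V V'
  obtain ⟨long, hlong, hlonglen, hlongv⟩ := exists_lift_path (adj0 := adj0) sel
    (fun u a b ha hb hab => (h2.existsUnique_adj_and_adj ha hb hab _ _).exists) hw hsel₁ hselₘ
  obtain ⟨short, hshort, hdisj, hshortv⟩ := h2.exists_short_paths hQQ huniq (hH0.2 Q).ge
    (hH0.2 Q').ge hp1 hp1' hq₁ hqₘ hq₁p hqₘp V V'
  refine ⟨Matrix.vecCons long short, Fin.cases hlong fun j => (hshort j).1,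
    pairwiseInternallyDisjoint_vecCons hdisj ?_, 0,
    Fin.cases (fun h => absurd rfl h) fun j _ => (hshort j).2, hlonglen ▸ hwlen⟩
  intro j v hv hv'
  by_contra! hne
  rcases hlongv v hv hne.1 hne.2 with ⟨x, hx, rfl⟩ | ⟨u, c, hu, hu', rfl⟩
  · have hxp : x ≠ p1 := fun h => hwavoid (by simp [← h, hx])
    rcases hshortv j _ hv' with ⟨c, h | h⟩ | h | ⟨x', y, -, ⟨hxq, hxy⟩ | ⟨hxq, hxy⟩, h⟩ <;>
      simp only [reduceCtorEq, inl.injEq, Prod.mk.injEq] at h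
    · exact hxp h.1
    · obtain ⟨rfl, rfl⟩ := h
      exact hxq ((hsel x hxp).1 hxy)
    · obtain ⟨rfl, rfl⟩ := h
      exact hxq ((hsel x hxp).2 hxy)
  · rcases hshortv j _ hv' with ⟨c', h | h⟩ | h | ⟨_, _, _, _, h⟩ <;>
      simp only [reduceCtorEq, inr.injEq, Prod.mk.injEq] at h
    exacts [hu h.1, hu' h.1]

/-- Let `k, d ≥ 2`, let `Δ = k + 1`, and let `H` (given by `adjH`) be
built by the 2-step method from the connected `(d, k+1)`-bipartite graph `H0` using
a `[k+1,k]`-transversal design `T`.  Suppose `Q` and `Q'` are distinct blocks of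
`H0` with exactly one common neighbour `p1`, and that there is a path in `H0` from
`Q` to `Q'` of length at most `μ` avoiding `p1`.  Then for any blocks
`(Q, V) ∈ B_Q` and `(Q', V') ∈ B_{Q'}` of `H` there are `k + 1` pairwise
internally-disjoint paths in `H` from `(Q, V)` to `(Q', V')`, of which `k` have
length at most `6` and the remaining one has length at most `μ`. -/
theorem twoStep_one_to_one_excess_one_common {ν0 β0 νT βT : Type} (d k μ : ℕ)
    (hd : 2 ≤ d) (hk : 2 ≤ k)
    (adj0 : ν0 → β0 → Prop) (groupT : νT → Fin (k + 1)) (adjT : νT → βT → Prop)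
    (adjH : ν0 × Fin k → β0 × βT → Prop)
    (hH0 : IsBipartiteDegRank d (k + 1) adj0)
    (hconn : (bipGraph adj0).Connected)
    (h2 : TwoStep (k + 1) k adj0 groupT adjT adjH)
    (Q Q' : β0) (hQQ : Q ≠ Q')
    (p1 : ν0) (hp1 : adj0 p1 Q) (hp1' : adj0 p1 Q')
    (huniq : ∀ q : ν0, adj0 q Q → adj0 q Q' → q = p1)
    (w : (bipGraph adj0).Walk (Sum.inr Q) (Sum.inr Q'))
    (hw : w.IsPath) (hwlen : w.length ≤ μ) (hwavoid : Sum.inl p1 ∉ w.support)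
    (V V' : βT) :
    ∃ p : Fin (k + 1) → (bipGraph adjH).Walk (Sum.inr (Q, V)) (Sum.inr (Q', V')),
      (∀ i, (p i).IsPath) ∧ PairwiseInternallyDisjoint p ∧
      ∃ i0 : Fin (k + 1),
        (∀ i : Fin (k + 1), i ≠ i0 → (p i).length ≤ 6) ∧ (p i0).length ≤ μ :=
  twoStep_one_to_one_excess_one_common_general d k μ adj0 groupT adjT adjH hH0 h2 Q Q' hQQ p1 hp1
    hp1' huniq w hw hwlen hwavoid V V'
end

section
/- Let k, Δ, d ≥ 2 and let H be built by the 2-step method from the connected (d,Δ)-bipartite graph H0 using the [Δ,k]-transversal design T. Let Q and Q' be distinct blocks of H0 that have a common neighbour in H0. Then for any block B_{Q,V} ∈ B_Q of H and any block B_{Q',V'} ∈ B_{Q'} of H there are min{Δ,k} pairwise internally-disjoint paths in H from B_{Q,V} to B_{Q',V'}, each of length at most 6. -/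
lemma bipGraph_adj {ν β : Type} (adj : ν → β → Prop) (x : ν) (b : β) :
    (bipGraph adj).Adj (Sum.inl x) (Sum.inr b) ↔ adj x b := by
  simp [bipGraph, SimpleGraph.fromRel_adj]

lemma bipGraph_adj' {ν β : Type} (adj : ν → β → Prop) (x : ν) (b : β) :
    (bipGraph adj).Adj (Sum.inr b) (Sum.inl x) ↔ adj x b := by
  rw [SimpleGraph.adj_comm]; exact bipGraph_adj adj x b

lemma exists_avoid {N n : ℕ} (A : Finset (Fin N)) (h : n + A.card ≤ N) :
    ∃ f : Fin n → Fin N, Function.Injective f ∧ ∀ i, f i ∉ A := by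
  have hc : n ≤ Aᶜ.card := by
    rw [Finset.card_compl, Fintype.card_fin]; omega
  refine ⟨fun i => Aᶜ.orderEmbOfCardLe hc i, fun i j hij => ?_, fun i => ?_⟩
  · exact (Aᶜ.orderEmbOfCardLe hc).injective hij
  · have := Finset.orderEmbOfCardLe_mem Aᶜ hc i
    simpa using this

/-- Processed API for the copy `T_Q` of the transversal design sitting over a block `Q`. -/
structure CopyAPI {ν0 β0 βT : Type} (Δ k : ℕ)
    (adj0 : ν0 → β0 → Prop) (adjH : ν0 × Fin k → β0 × βT → Prop) (Q : β0) where
  enum : Fin Δ → ν0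
  enum_inj : Function.Injective enum
  enum_adj : ∀ i, adj0 (enum i) Q
  enum_surj : ∀ q, adj0 q Q → ∃ i, enum i = q
  nbr_exists : ∀ (W : βT) (i : Fin Δ), ∃ u : ν0 × Fin k, u.1 = enum i ∧ adjH u (Q, W)
  nbr_uniq : ∀ (W : βT) (u v : ν0 × Fin k), adjH u (Q, W) → adjH v (Q, W) → u.1 = v.1 → u = v
  gen_exists : ∀ u v : ν0 × Fin k, adj0 u.1 Q → adj0 v.1 Q → u.1 ≠ v.1 →
    ∃ W, adjH u (Q, W) ∧ adjH v (Q, W)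
  gen_uniq : ∀ (u v : ν0 × Fin k) (W W' : βT), u.1 ≠ v.1 →
    adjH u (Q, W) → adjH v (Q, W) → adjH u (Q, W') → adjH v (Q, W') → W = W'

lemma TwoStep.copyAPI {ν0 β0 νT βT : Type} {Δ k : ℕ}
    {adj0 : ν0 → β0 → Prop} {groupT : νT → Fin Δ} {adjT : νT → βT → Prop}
    {adjH : ν0 × Fin k → β0 × βT → Prop}
    (h2 : TwoStep Δ k adj0 groupT adjT adjH) (Q : β0) :
    Nonempty (CopyAPI Δ k adj0 adjH Q) := by
  obtain ⟨enum, f, g, henj, hea, hes, hfst, hiff⟩ := h2.copy Q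
  have key : ∀ (u : ν0 × Fin k) (hu : adj0 u.1 Q) (W : βT),
      adjH u (Q, W) ↔ adjT (f.symm ⟨u, hu⟩) (g.symm W) := by
    intro u hu W
    have := hiff (f.symm ⟨u, hu⟩) (g.symm W)
    rw [f.apply_symm_apply, g.apply_symm_apply] at this
    exact this.symm
  have grp : ∀ (u : ν0 × Fin k) (hu : adj0 u.1 Q), u.1 = enum (groupT (f.symm ⟨u, hu⟩)) := by
    intro u hu
    have := hfst (f.symm ⟨u, hu⟩)
    rwa [f.apply_symm_apply] at this
  refine ⟨⟨enum, henj, hea, hes, ?_, ?_, ?_, ?_⟩⟩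
  · -- nbr_exists
    intro W i
    obtain ⟨x, ⟨hg, ha⟩, -⟩ := h2.td.blockMeets (g.symm W) i
    refine ⟨(f x : ν0 × Fin k), by rw [hfst x, hg], ?_⟩
    have := (hiff x (g.symm W)).mp ha
    rwa [g.apply_symm_apply] at this
  · -- nbr_uniq
    intro W u v hu hv h1
    have hu0 : adj0 u.1 Q := h2.supp u Q W hu
    have hv0 : adj0 v.1 Q := h2.supp v Q W hv
    obtain ⟨x, -, hx⟩ := h2.td.blockMeets (g.symm W) (groupT (f.symm ⟨u, hu0⟩))
    have e1 : f.symm ⟨u, hu0⟩ = x := hx _ ⟨rfl, (key u hu0 W).mp hu⟩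
    have hgv : groupT (f.symm ⟨v, hv0⟩) = groupT (f.symm ⟨u, hu0⟩) := by
      apply henj
      rw [← grp u hu0, ← grp v hv0, h1]
    have e2 : f.symm ⟨v, hv0⟩ = x := hx _ ⟨hgv, (key v hv0 W).mp hv⟩
    have : (⟨u, hu0⟩ : {x : ν0 × Fin k // adj0 x.1 Q}) = ⟨v, hv0⟩ := by
      apply f.symm.injective; rw [e1, e2]
    exact congrArg Subtype.val this
  · -- gen_exists
    intro u v hu hv huv
    have hg : groupT (f.symm ⟨u, hu⟩) ≠ groupT (f.symm ⟨v, hv⟩) := by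
      intro h
      apply huv
      rw [grp u hu, grp v hv, h]
    obtain ⟨b, ⟨hbu, hbv⟩, -⟩ := h2.td.pairGen _ _ hg
    refine ⟨g b, ?_, ?_⟩
    · have := (hiff (f.symm ⟨u, hu⟩) b).mp hbu
      rwa [f.apply_symm_apply] at this
    · have := (hiff (f.symm ⟨v, hv⟩) b).mp hbv
      rwa [f.apply_symm_apply] at this
  · -- gen_uniq
    intro u v W W' huv hu hv hu' hv'
    have hu0 : adj0 u.1 Q := h2.supp u Q W hu
    have hv0 : adj0 v.1 Q := h2.supp v Q W hv
    have hg : groupT (f.symm ⟨u, hu0⟩) ≠ groupT (f.symm ⟨v, hv0⟩) := by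
      intro h
      apply huv
      rw [grp u hu0, grp v hv0, h]
    obtain ⟨b, -, hb⟩ := h2.td.pairGen _ _ hg
    have e1 : g.symm W = b := hb _ ⟨(key u hu0 W).mp hu, (key v hv0 W).mp hv⟩
    have e2 : g.symm W' = b := hb _ ⟨(key u hu0 W').mp hu', (key v hv0 W').mp hv'⟩
    apply g.symm.injective; rw [e1, e2]

section shapes
variable {ν0 β0 βT : Type} {Δ k : ℕ} {adj0 : ν0 → β0 → Prop}
  {adjH : ν0 × Fin k → β0 × βT → Prop} {Q Q' : β0} {V V' : βT} {p1 : ν0}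

/-- length-2 path through a common neighbour `z`. -/
lemma shape_short (hQQ : Q ≠ Q') (z : ν0 × Fin k)
    (hz : adjH z (Q, V)) (hz' : adjH z (Q', V')) :
    ∃ wk : (bipGraph adjH).Walk (Sum.inr (Q, V)) (Sum.inr (Q', V')),
      wk.IsPath ∧ wk.length ≤ 6 ∧
      ∀ v ∈ wk.support, v = Sum.inr (Q, V) ∨ v = Sum.inr (Q', V') ∨ v = Sum.inl z := by
  refine ⟨.cons ((bipGraph_adj' adjH z (Q,V)).mpr hz)
      (.cons ((bipGraph_adj adjH z (Q',V')).mpr hz') .nil), ?_, ?_, ?_⟩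
  · rw [SimpleGraph.Walk.isPath_def]
    simp [List.nodup_cons, hQQ, Prod.ext_iff]
  · simp
  · intro v hv
    simp only [SimpleGraph.Walk.support_cons, SimpleGraph.Walk.support_nil,
      List.mem_cons, List.mem_singleton] at hv
    tauto

/-- length-6 path `s - a - c - w - c' - b - t`. -/
lemma shape_full (hQQ : Q ≠ Q')
    (cQ : CopyAPI Δ k adj0 adjH Q) (cQ' : CopyAPI Δ k adj0 adjH Q')
    (hp1 : adj0 p1 Q) (hp1' : adj0 p1 Q') (a w b : ν0 × Fin k)
    (ha : adjH a (Q, V)) (hb : adjH b (Q', V')) (hw1 : w.1 = p1)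
    (haw : a.1 ≠ p1) (hbw : b.1 ≠ p1)
    (hwV : ¬ adjH w (Q, V)) (hwV' : ¬ adjH w (Q', V')) (hab : a ≠ b)
    (ha0 : adj0 a.1 Q) (hb0 : adj0 b.1 Q') :
    ∃ wk : (bipGraph adjH).Walk (Sum.inr (Q, V)) (Sum.inr (Q', V')),
      wk.IsPath ∧ wk.length ≤ 6 ∧
      ∀ v ∈ wk.support, v = Sum.inr (Q, V) ∨ v = Sum.inr (Q', V') ∨
        v = Sum.inl a ∨ v = Sum.inl b ∨ v = Sum.inl w ∨
        (∃ c, v = Sum.inr (Q, c) ∧ adjH w (Q, c)) ∨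
        (∃ c, v = Sum.inr (Q', c) ∧ adjH w (Q', c)) := by
  obtain ⟨c, hac, hwc⟩ := cQ.gen_exists a w ha0 (by rw [hw1]; exact hp1)
    (by rw [hw1]; exact haw)
  obtain ⟨c', hbc', hwc'⟩ := cQ'.gen_exists b w hb0 (by rw [hw1]; exact hp1')
    (by rw [hw1]; exact hbw)
  have hcV : c ≠ V := fun h => hwV (h ▸ hwc)
  have hc'V' : c' ≠ V' := fun h => hwV' (h ▸ hwc')
  have haw' : a ≠ w := fun h => haw (h ▸ hw1)
  have hbw' : b ≠ w := fun h => hbw (h ▸ hw1)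
  refine ⟨.cons ((bipGraph_adj' adjH a (Q,V)).mpr ha)
      (.cons ((bipGraph_adj adjH a (Q,c)).mpr hac)
      (.cons ((bipGraph_adj' adjH w (Q,c)).mpr hwc)
      (.cons ((bipGraph_adj adjH w (Q',c')).mpr hwc')
      (.cons ((bipGraph_adj' adjH b (Q',c')).mpr hbc')
      (.cons ((bipGraph_adj adjH b (Q',V')).mpr hb) .nil))))), ?_, ?_, ?_⟩
  · rw [SimpleGraph.Walk.isPath_def]
    simp only [SimpleGraph.Walk.support_cons, SimpleGraph.Walk.support_nil]
    simp [List.nodup_cons, List.mem_cons, Prod.ext_iff, hQQ, Ne.symm hQQ, hcV,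
      Ne.symm hcV, hc'V', Ne.symm hc'V', haw', Ne.symm haw', hbw', Ne.symm hbw',
      hab, Ne.symm hab]
  · simp
  · intro v hv
    simp only [SimpleGraph.Walk.support_cons, SimpleGraph.Walk.support_nil,
      List.mem_cons, List.mem_singleton] at hv
    rcases hv with h|h|h|h|h|h|h
    · exact Or.inl h
    · exact Or.inr (Or.inr (Or.inl h))
    · exact Or.inr <| Or.inr <| Or.inr <| Or.inr <| Or.inr <| Or.inl ⟨c, h, hwc⟩
    · exact Or.inr <| Or.inr <| Or.inr <| Or.inr <| Or.inl h
    · exact Or.inr <| Or.inr <| Or.inr <| Or.inr <| Or.inr <| Or.inr ⟨c', h, hwc'⟩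
    · exact Or.inr <| Or.inr <| Or.inr <| Or.inl h
    · rcases h with h|h
      · exact Or.inr (Or.inl h)
      · exact absurd h (by simp)

/-- length-4 path `s - w - c' - b - t` (where `w` is adjacent to the source). -/
lemma shape_viaS (hQQ : Q ≠ Q')
    (cQ' : CopyAPI Δ k adj0 adjH Q')
    (hp1' : adj0 p1 Q') (w b : ν0 × Fin k)
    (hws : adjH w (Q, V)) (hb : adjH b (Q', V')) (hw1 : w.1 = p1)
    (hbw : b.1 ≠ p1) (hwV' : ¬ adjH w (Q', V')) (hb0 : adj0 b.1 Q') :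
    ∃ wk : (bipGraph adjH).Walk (Sum.inr (Q, V)) (Sum.inr (Q', V')),
      wk.IsPath ∧ wk.length ≤ 6 ∧
      ∀ v ∈ wk.support, v = Sum.inr (Q, V) ∨ v = Sum.inr (Q', V') ∨
        v = Sum.inl w ∨ v = Sum.inl b ∨
        (∃ c, v = Sum.inr (Q', c) ∧ adjH w (Q', c)) := by
  obtain ⟨c', hbc', hwc'⟩ := cQ'.gen_exists b w hb0 (by rw [hw1]; exact hp1')
    (by rw [hw1]; exact hbw)
  have hc'V' : c' ≠ V' := fun h => hwV' (h ▸ hwc')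
  have hbw' : b ≠ w := fun h => hbw (h ▸ hw1)
  refine ⟨.cons ((bipGraph_adj' adjH w (Q,V)).mpr hws)
      (.cons ((bipGraph_adj adjH w (Q',c')).mpr hwc')
      (.cons ((bipGraph_adj' adjH b (Q',c')).mpr hbc')
      (.cons ((bipGraph_adj adjH b (Q',V')).mpr hb) .nil))), ?_, ?_, ?_⟩
  · rw [SimpleGraph.Walk.isPath_def]
    simp only [SimpleGraph.Walk.support_cons, SimpleGraph.Walk.support_nil]
    simp [List.nodup_cons, List.mem_cons, Prod.ext_iff, hQQ, Ne.symm hQQ,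
      hc'V', Ne.symm hc'V', hbw', Ne.symm hbw']
  · simp
  · intro v hv
    simp only [SimpleGraph.Walk.support_cons, SimpleGraph.Walk.support_nil,
      List.mem_cons, List.mem_singleton] at hv
    rcases hv with h|h|h|h|h
    · exact Or.inl h
    · exact Or.inr (Or.inr (Or.inl h))
    · exact Or.inr <| Or.inr <| Or.inr <| Or.inr ⟨c', h, hwc'⟩
    · exact Or.inr <| Or.inr <| Or.inr <| Or.inl h
    · rcases h with h|h
      · exact Or.inr (Or.inl h)
      · exact absurd h (by simp)

/-- length-4 path `s - a - c - w - t` (where `w` is adjacent to the target). -/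
lemma shape_viaT (hQQ : Q ≠ Q')
    (cQ : CopyAPI Δ k adj0 adjH Q)
    (hp1 : adj0 p1 Q) (a w : ν0 × Fin k)
    (ha : adjH a (Q, V)) (hwt : adjH w (Q', V')) (hw1 : w.1 = p1)
    (haw : a.1 ≠ p1) (hwV : ¬ adjH w (Q, V)) (ha0 : adj0 a.1 Q) :
    ∃ wk : (bipGraph adjH).Walk (Sum.inr (Q, V)) (Sum.inr (Q', V')),
      wk.IsPath ∧ wk.length ≤ 6 ∧
      ∀ v ∈ wk.support, v = Sum.inr (Q, V) ∨ v = Sum.inr (Q', V') ∨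
        v = Sum.inl w ∨ v = Sum.inl a ∨
        (∃ c, v = Sum.inr (Q, c) ∧ adjH w (Q, c)) := by
  obtain ⟨c, hac, hwc⟩ := cQ.gen_exists a w ha0 (by rw [hw1]; exact hp1)
    (by rw [hw1]; exact haw)
  have hcV : c ≠ V := fun h => hwV (h ▸ hwc)
  have haw' : a ≠ w := fun h => haw (h ▸ hw1)
  refine ⟨.cons ((bipGraph_adj' adjH a (Q,V)).mpr ha)
      (.cons ((bipGraph_adj adjH a (Q,c)).mpr hac)
      (.cons ((bipGraph_adj' adjH w (Q,c)).mpr hwc)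
      (.cons ((bipGraph_adj adjH w (Q',V')).mpr hwt) .nil))), ?_, ?_, ?_⟩
  · rw [SimpleGraph.Walk.isPath_def]
    simp only [SimpleGraph.Walk.support_cons, SimpleGraph.Walk.support_nil]
    simp [List.nodup_cons, List.mem_cons, Prod.ext_iff, hQQ, Ne.symm hQQ,
      hcV, Ne.symm hcV, haw', Ne.symm haw']
  · simp
  · intro v hv
    simp only [SimpleGraph.Walk.support_cons, SimpleGraph.Walk.support_nil,
      List.mem_cons, List.mem_singleton] at hv
    rcases hv with h|h|h|h|h
    · exact Or.inl h
    · exact Or.inr <| Or.inr <| Or.inr <| Or.inl h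
    · exact Or.inr <| Or.inr <| Or.inr <| Or.inr ⟨c, h, hwc⟩
    · exact Or.inr (Or.inr (Or.inl h))
    · rcases h with h|h
      · exact Or.inr (Or.inl h)
      · exact absurd h (by simp)

/-- length-6 path `s - w - c1 - x - c2 - w' - t` travelling inside the copy over `Q'`. -/
lemma shape_special (hQQ : Q ≠ Q')
    (cQ' : CopyAPI Δ k adj0 adjH Q')
    (hp1' : adj0 p1 Q') (w w' x : ν0 × Fin k)
    (hws : adjH w (Q, V)) (hw1 : w.1 = p1)
    (hw't : adjH w' (Q', V')) (hw'1 : w'.1 = p1) (hww' : w ≠ w')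
    (hx0 : adj0 x.1 Q') (hx1 : x.1 ≠ p1) (hxt : ¬ adjH x (Q', V')) :
    ∃ wk : (bipGraph adjH).Walk (Sum.inr (Q, V)) (Sum.inr (Q', V')),
      wk.IsPath ∧ wk.length ≤ 6 ∧
      ∀ v ∈ wk.support, v = Sum.inr (Q, V) ∨ v = Sum.inr (Q', V') ∨
        v = Sum.inl w ∨ v = Sum.inl w' ∨ v = Sum.inl x ∨
        (∃ c, v = Sum.inr (Q', c)) := by
  obtain ⟨c1, hwc1, hxc1⟩ := cQ'.gen_exists w x (by rw [hw1]; exact hp1') hx0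
    (by rw [hw1]; exact fun h => hx1 h.symm)
  obtain ⟨c2, hxc2, hw'c2⟩ := cQ'.gen_exists x w' hx0 (by rw [hw'1]; exact hp1')
    (by rw [hw'1]; exact hx1)
  have hc12 : c1 ≠ c2 := by
    intro h
    subst h
    exact hww' (cQ'.nbr_uniq c1 w w' hwc1 hw'c2 (by rw [hw1, hw'1]))
  have hc1V' : c1 ≠ V' := by
    intro h
    exact hww' (cQ'.nbr_uniq V' w w' (h ▸ hwc1) hw't (by rw [hw1, hw'1]))
  have hc2V' : c2 ≠ V' := fun h => hxt (h ▸ hxc2)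
  have hwx : w ≠ x := fun h => hx1 (h ▸ hw1 : x.1 = p1)
  have hw'x : w' ≠ x := fun h => hx1 (h ▸ hw'1 : x.1 = p1)
  refine ⟨.cons ((bipGraph_adj' adjH w (Q,V)).mpr hws)
      (.cons ((bipGraph_adj adjH w (Q',c1)).mpr hwc1)
      (.cons ((bipGraph_adj' adjH x (Q',c1)).mpr hxc1)
      (.cons ((bipGraph_adj adjH x (Q',c2)).mpr hxc2)
      (.cons ((bipGraph_adj' adjH w' (Q',c2)).mpr hw'c2)
      (.cons ((bipGraph_adj adjH w' (Q',V')).mpr hw't) .nil))))), ?_, ?_, ?_⟩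
  · rw [SimpleGraph.Walk.isPath_def]
    simp only [SimpleGraph.Walk.support_cons, SimpleGraph.Walk.support_nil]
    simp [List.nodup_cons, List.mem_cons, Prod.ext_iff, hQQ, Ne.symm hQQ,
      hc12, Ne.symm hc12, hc1V', Ne.symm hc1V', hc2V', Ne.symm hc2V',
      hwx, Ne.symm hwx, hw'x, Ne.symm hw'x, hww', Ne.symm hww']
  · simp
  · intro v hv
    simp only [SimpleGraph.Walk.support_cons, SimpleGraph.Walk.support_nil,
      List.mem_cons, List.mem_singleton] at hv
    rcases hv with h|h|h|h|h|h|h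
    · exact Or.inl h
    · exact Or.inr <| Or.inr <| Or.inl h
    · exact Or.inr <| Or.inr <| Or.inr <| Or.inr <| Or.inr ⟨c1, h⟩
    · exact Or.inr <| Or.inr <| Or.inr <| Or.inr <| Or.inl h
    · exact Or.inr <| Or.inr <| Or.inr <| Or.inr <| Or.inr ⟨c2, h⟩
    · exact Or.inr <| Or.inr <| Or.inr <| Or.inl h
    · rcases h with h|h
      · exact Or.inr (Or.inl h)
      · exact absurd h (by simp)

end shapes

lemma pid_of_subsets {Vt ι : Type} {G : SimpleGraph Vt} {s t : Vt}
    {p : ι → G.Walk s t} (S : ι → Set Vt)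
    (hsub : ∀ i, ∀ v ∈ (p i).support, v = s ∨ v = t ∨ v ∈ S i)
    (hdisj : ∀ i j, ∀ v, v ∈ S i → v ∈ S j → v ≠ s → v ≠ t → i = j) :
    PairwiseInternallyDisjoint (s := fun _ => s) (t := fun _ => t) p := by
  constructor
  · intro i j v _ hj
    exact hj
  · intro i j v hvl hi hj
    have hs : v ≠ s := (hvl i).1
    have ht : v ≠ t := (hvl i).2
    have h1 : v ∈ S i := by
      rcases hsub i v hi with h|h|h <;>
        first | exact absurd h hs | exact absurd h ht | exact h
    have h2 : v ∈ S j := by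
      rcases hsub j v hj with h|h|h <;>
        first | exact absurd h hs | exact absurd h ht | exact h
    exact hdisj i j v h1 h2 hs ht

/-- Let `k, Δ, d ≥ 2` and let `H` (given by `adjH`) be built by the
2-step method from the connected `(d,Δ)`-bipartite graph `H0` using the
`[Δ,k]`-transversal design `T`.  If `Q` and `Q'` are distinct blocks of `H0` with a
common neighbour in `H0`, then for any blocks `(Q, V) ∈ B_Q` and
`(Q', V') ∈ B_{Q'}` of `H` there are `min Δ k` pairwise internally-disjoint paths
in `H` from `(Q, V)` to `(Q', V')`, each of length at most `6`. -/
theorem twoStep_one_to_one_common_neighbour {ν0 β0 νT βT : Type} (d Δ k : ℕ)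
    (hd : 2 ≤ d) (hΔ : 2 ≤ Δ) (hk : 2 ≤ k)
    (adj0 : ν0 → β0 → Prop) (groupT : νT → Fin Δ) (adjT : νT → βT → Prop)
    (adjH : ν0 × Fin k → β0 × βT → Prop)
    (hH0 : IsBipartiteDegRank d Δ adj0)
    (hconn : (bipGraph adj0).Connected)
    (h2 : TwoStep Δ k adj0 groupT adjT adjH)
    (Q Q' : β0) (hQQ : Q ≠ Q')
    (p1 : ν0) (hp1 : adj0 p1 Q) (hp1' : adj0 p1 Q')
    (V V' : βT) :
    ∃ p : Fin (min Δ k) →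
        (bipGraph adjH).Walk (Sum.inr (Q, V)) (Sum.inr (Q', V')),
      (∀ i, (p i).IsPath ∧ (p i).length ≤ 6) ∧
      PairwiseInternallyDisjoint p := by
  classical
  obtain ⟨cQ⟩ := h2.copyAPI Q
  obtain ⟨cQ'⟩ := h2.copyAPI Q'
  have hmΔ : min Δ k ≤ Δ := min_le_left _ _
  have hmk : min Δ k ≤ k := min_le_right _ _
  set m := min Δ k with hm
  obtain ⟨iQ, hiQ⟩ := cQ.enum_surj p1 hp1
  obtain ⟨iQ', hiQ'⟩ := cQ'.enum_surj p1 hp1'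
  obtain ⟨ys, hys1, hysV⟩ := cQ.nbr_exists V iQ
  rw [hiQ] at hys1
  obtain ⟨ys', hys'1, hys'V'⟩ := cQ'.nbr_exists V' iQ'
  rw [hiQ'] at hys'1
  have gidx_ex : ∀ u : ν0 × Fin k, adjH u (Q, V) → ∃ i, cQ.enum i = u.1 :=
    fun u hu => cQ.enum_surj u.1 (h2.supp u Q V hu)
  have gidx_ex' : ∀ u : ν0 × Fin k, adjH u (Q', V') → ∃ i, cQ'.enum i = u.1 :=
    fun u hu => cQ'.enum_surj u.1 (h2.supp u Q' V' hu)
  have hΔ0 : 0 < Δ := by omega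
  set gidx : ν0 × Fin k → Fin Δ :=
    fun u => if h : ∃ i, cQ.enum i = u.1 then h.choose else ⟨0, hΔ0⟩ with hgidx
  have gidx_spec : ∀ u : ν0 × Fin k, (∃ i, cQ.enum i = u.1) → cQ.enum (gidx u) = u.1 := by
    intro u h
    simp only [hgidx, dif_pos h]
    exact h.choose_spec
  set gidx' : ν0 × Fin k → Fin Δ :=
    fun u => if h : ∃ i, cQ'.enum i = u.1 then h.choose else ⟨0, hΔ0⟩ with hgidx'
  have gidx'_spec : ∀ u : ν0 × Fin k, (∃ i, cQ'.enum i = u.1) → cQ'.enum (gidx' u) = u.1 := by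
    intro u h
    simp only [hgidx', dif_pos h]
    exact h.choose_spec
  have hZfin : {u : ν0 × Fin k | adjH u (Q, V) ∧ adjH u (Q', V')}.Finite := by
    have hinj : Function.Injective
        (fun z : {u : ν0 × Fin k | adjH u (Q, V) ∧ adjH u (Q', V')} => gidx z.1) := by
      intro z z' hzz
      have h1 : cQ.enum (gidx z.1) = z.1.1 := gidx_spec _ (gidx_ex _ z.2.1)
      have h2' : cQ.enum (gidx z'.1) = z'.1.1 := gidx_spec _ (gidx_ex _ z'.2.1)
      have hzz2 : gidx z.1 = gidx z'.1 := hzz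
      have heq : z.1.1 = z'.1.1 := by rw [← h1, ← h2', hzz2]
      exact Subtype.ext (cQ.nbr_uniq V z.1 z'.1 z.2.1 z'.2.1 heq)
    haveI := Finite.of_injective _ hinj
    exact Set.toFinite _
  set ZF : Finset (ν0 × Fin k) := hZfin.toFinset with hZF
  have zmem : ∀ u, u ∈ ZF ↔ adjH u (Q, V) ∧ adjH u (Q', V') := by
    intro u
    rw [hZF, Set.Finite.mem_toFinset]
    exact Iff.rfl
  set r := ZF.card with hr
  have memZgQ : ∀ u ∈ ZF, ∀ i : Fin Δ, u.1 = cQ.enum i → i ∈ ZF.image gidx := by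
    intro u hu i hi
    have h1 : cQ.enum (gidx u) = u.1 := gidx_spec u (gidx_ex u ((zmem u).mp hu).1)
    have h2' : gidx u = i := cQ.enum_inj (by rw [h1, hi])
    exact h2' ▸ Finset.mem_image_of_mem gidx hu
  have memZgQ' : ∀ u ∈ ZF, ∀ i : Fin Δ, u.1 = cQ'.enum i → i ∈ ZF.image gidx' := by
    intro u hu i hi
    have h1 : cQ'.enum (gidx' u) = u.1 := gidx'_spec u (gidx_ex' u ((zmem u).mp hu).2)
    have h2' : gidx' u = i := cQ'.enum_inj (by rw [h1, hi])
    exact h2' ▸ Finset.mem_image_of_mem gidx' hu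
  have notZQ : ∀ (u : ν0 × Fin k) (i : Fin Δ), u.1 = cQ.enum i →
      i ∉ ZF.image gidx → u ∉ ZF :=
    fun u i h1 hni hu => hni (memZgQ u hu i h1)
  have notZQ' : ∀ (u : ν0 × Fin k) (i : Fin Δ), u.1 = cQ'.enum i →
      i ∉ ZF.image gidx' → u ∉ ZF :=
    fun u i h1 hni hu => hni (memZgQ' u hu i h1)
  have hZgQ : (ZF.image gidx).card ≤ r := Finset.card_image_le
  have hZgQ' : (ZF.image gidx').card ≤ r := Finset.card_image_le
  have ysZ : ys ∈ ZF ↔ ys = ys' := by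
    constructor
    · intro h
      exact cQ'.nbr_uniq V' ys ys' ((zmem ys).mp h).2 hys'V' (by rw [hys1, hys'1])
    · intro h
      exact (zmem ys).mpr ⟨hysV, by rw [h]; exact hys'V'⟩
  have ys'Z : ys' ∈ ZF ↔ ys = ys' := by
    constructor
    · intro h
      exact cQ.nbr_uniq V ys ys' hysV ((zmem ys').mp h).1 (by rw [hys1, hys'1])
    · intro h
      exact (zmem ys').mpr ⟨by rw [← h]; exact hysV, hys'V'⟩
  set zE : Fin r → ν0 × Fin k := fun i => (ZF.equivFin.symm i : ν0 × Fin k) with hzE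
  have zE_mem : ∀ i, zE i ∈ ZF := fun i => (ZF.equivFin.symm i).2
  have zE_inj : Function.Injective zE := by
    intro i j h
    exact ZF.equivFin.symm.injective (Subtype.ext h)
  by_cases hA : m ≤ r
  · -- Case A : enough common neighbours
    have ex : ∀ i : Fin m, ∃ wk : (bipGraph adjH).Walk (Sum.inr (Q, V)) (Sum.inr (Q', V')),
        wk.IsPath ∧ wk.length ≤ 6 ∧
        ∀ v ∈ wk.support, v = Sum.inr (Q, V) ∨ v = Sum.inr (Q', V') ∨
          v ∈ ({Sum.inl (zE (Fin.castLE hA i))} : Set ((ν0 × Fin k) ⊕ (β0 × βT))) := by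
      intro i
      obtain ⟨wk, h1, h2', h3⟩ := shape_short hQQ (zE (Fin.castLE hA i))
        ((zmem _).mp (zE_mem _)).1 ((zmem _).mp (zE_mem _)).2
      exact ⟨wk, h1, h2', fun v hv => by simpa using h3 v hv⟩
    choose p hp using ex
    refine ⟨p, fun i => ⟨(hp i).1, (hp i).2.1⟩, ?_⟩
    apply pid_of_subsets (S := fun i => {Sum.inl (zE (Fin.castLE hA i))})
    · exact fun i => (hp i).2.2
    · intro i j v hvi hvj _ _
      simp only [Set.mem_singleton_iff] at hvi hvj
      have h4 : zE (Fin.castLE hA i) = zE (Fin.castLE hA j) :=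
        Sum.inl.inj (hvi.symm.trans hvj)
      have h5 := zE_inj h4
      exact Fin.ext (by simpa using congrArg Fin.val h5)
  push_neg at hA
  by_cases hBC : ys = ys'
  · -- Case B : `ys = ys'` lies in `Z`
    have hr1 : 0 < r := Finset.card_pos.mpr ⟨ys, ysZ.mpr hBC⟩
    obtain ⟨ρ, hρinj, hρav⟩ := exists_avoid (N := k) (n := m - r) {ys.2}
      (by rw [Finset.card_singleton]; omega)
    obtain ⟨α, hαinj, hαav⟩ := exists_avoid (N := Δ) (n := m - r) (ZF.image gidx)
      (by omega)
    obtain ⟨β, hβinj, hβav⟩ := exists_avoid (N := Δ) (n := m - r) (ZF.image gidx')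
      (by omega)
    choose aF haF1 haF2 using fun j : Fin (m - r) => cQ.nbr_exists V (α j)
    choose bF hbF1 hbF2 using fun j : Fin (m - r) => cQ'.nbr_exists V' (β j)
    set wF : Fin (m - r) → ν0 × Fin k := fun j => (p1, ρ j) with hwF
    have hiQZ : iQ ∈ ZF.image gidx := memZgQ ys (ysZ.mpr hBC) iQ (by rw [hys1, hiQ])
    have hiQ'Z : iQ' ∈ ZF.image gidx' := memZgQ' ys (ysZ.mpr hBC) iQ' (by rw [hys1, hiQ'])
    have haw : ∀ j, (aF j).1 ≠ p1 := by
      intro j h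
      have hji : α j = iQ := cQ.enum_inj (by rw [← haF1 j, h, hiQ])
      exact hαav j (hji ▸ hiQZ)
    have hbw : ∀ j, (bF j).1 ≠ p1 := by
      intro j h
      have hji : β j = iQ' := cQ'.enum_inj (by rw [← hbF1 j, h, hiQ'])
      exact hβav j (hji ▸ hiQ'Z)
    have haZ : ∀ j, aF j ∉ ZF := fun j => notZQ _ (α j) (haF1 j) (hαav j)
    have hbZ : ∀ j, bF j ∉ ZF := fun j => notZQ' _ (β j) (hbF1 j) (hβav j)
    have hwV : ∀ j, ¬ adjH (wF j) (Q, V) := by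
      intro j h
      have heq : wF j = ys := cQ.nbr_uniq V _ _ h hysV hys1.symm
      exact hρav j (Finset.mem_singleton.mpr (congrArg Prod.snd heq))
    have hwV' : ∀ j, ¬ adjH (wF j) (Q', V') := by
      intro j h
      have heq : wF j = ys' := cQ'.nbr_uniq V' _ _ h hys'V' hys'1.symm
      have h2'' : ρ j = ys.2 := by rw [hBC]; exact congrArg Prod.snd heq
      exact hρav j (Finset.mem_singleton.mpr h2'')
    have hab : ∀ j j', aF j ≠ bF j' := by
      intro j j' h
      exact haZ j ((zmem _).mpr ⟨haF2 j, by rw [h]; exact hbF2 j'⟩)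
    set jdx : Fin m → Fin (m - r) := fun i => ⟨(i : ℕ) - r, by have := i.isLt; omega⟩
      with hjdx
    set S : Fin m → Set ((ν0 × Fin k) ⊕ (β0 × βT)) := fun i =>
      if h : (i : ℕ) < r then {Sum.inl (zE ⟨i, h⟩)}
      else
        {Sum.inl (aF (jdx i)), Sum.inl (bF (jdx i)), Sum.inl (wF (jdx i))} ∪
        {v | ∃ c, v = Sum.inr (Q, c) ∧ adjH (wF (jdx i)) (Q, c)} ∪
        {v | ∃ c, v = Sum.inr (Q', c) ∧ adjH (wF (jdx i)) (Q', c)} with hS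
    have ex : ∀ i : Fin m, ∃ wk : (bipGraph adjH).Walk (Sum.inr (Q, V)) (Sum.inr (Q', V')),
        wk.IsPath ∧ wk.length ≤ 6 ∧
        ∀ v ∈ wk.support, v = Sum.inr (Q, V) ∨ v = Sum.inr (Q', V') ∨ v ∈ S i := by
      intro i
      by_cases h : (i : ℕ) < r
      · obtain ⟨wk, h1, h2', h3⟩ := shape_short hQQ (zE ⟨i, h⟩)
          ((zmem _).mp (zE_mem _)).1 ((zmem _).mp (zE_mem _)).2
        refine ⟨wk, h1, h2', fun v hv => ?_⟩
        rcases h3 v hv with h4|h4|h4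
        · exact Or.inl h4
        · exact Or.inr (Or.inl h4)
        · refine Or.inr (Or.inr ?_)
          simp only [hS, dif_pos h, Set.mem_singleton_iff]
          exact h4
      · obtain ⟨wk, h1, h2', h3⟩ := shape_full hQQ cQ cQ' hp1 hp1'
          (aF (jdx i)) (wF (jdx i)) (bF (jdx i))
          (haF2 _) (hbF2 _) rfl (haw _) (hbw _) (hwV _) (hwV' _) (hab _ _)
          (h2.supp _ Q V (haF2 _)) (h2.supp _ Q' V' (hbF2 _))
        refine ⟨wk, h1, h2', fun v hv => ?_⟩
        rcases h3 v hv with h4|h4|h4|h4|h4|h4|h4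
        · exact Or.inl h4
        · exact Or.inr (Or.inl h4)
        all_goals refine Or.inr (Or.inr ?_)
        all_goals simp only [hS, dif_neg h, Set.mem_union, Set.mem_insert_iff,
          Set.mem_singleton_iff, Set.mem_setOf_eq]
        · exact Or.inl (Or.inl (Or.inl h4))
        · exact Or.inl (Or.inl (Or.inr (Or.inl h4)))
        · exact Or.inl (Or.inl (Or.inr (Or.inr h4)))
        · exact Or.inl (Or.inr h4)
        · exact Or.inr h4
    choose p hp using ex
    refine ⟨p, fun i => ⟨(hp i).1, (hp i).2.1⟩, ?_⟩
    apply pid_of_subsets S (fun i => (hp i).2.2)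
    intro i i' v hvi hvi' hvs hvt
    have hij : jdx i = jdx i' → ¬ (i : ℕ) < r → ¬ (i' : ℕ) < r → i = i' := by
      intro hjj hh hh'
      have h6 := congrArg Fin.val hjj
      simp only [hjdx] at h6
      exact Fin.ext (by omega)
    by_cases h : (i : ℕ) < r <;> by_cases h' : (i' : ℕ) < r
    · simp only [hS, dif_pos h, dif_pos h', Set.mem_singleton_iff] at hvi hvi'
      have h6 := zE_inj (Sum.inl.inj (hvi.symm.trans hvi'))
      exact Fin.ext (by simpa using congrArg Fin.val h6)
    · exfalso
      simp only [hS, dif_pos h, dif_neg h', Set.mem_union, Set.mem_insert_iff,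
        Set.mem_singleton_iff, Set.mem_setOf_eq] at hvi hvi'
      rcases hvi' with ((h5|h5|h5)|⟨c,hc,-⟩)|⟨c,hc,-⟩
      · exact haZ _ ((Sum.inl.inj (hvi.symm.trans h5)) ▸ zE_mem ⟨i, h⟩)
      · exact hbZ _ ((Sum.inl.inj (hvi.symm.trans h5)) ▸ zE_mem ⟨i, h⟩)
      · exact hwV _ ((Sum.inl.inj (hvi.symm.trans h5)) ▸ ((zmem _).mp (zE_mem ⟨i, h⟩)).1)
      · rw [hvi] at hc; exact absurd hc (by simp)
      · rw [hvi] at hc; exact absurd hc (by simp)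
    · exfalso
      simp only [hS, dif_neg h, dif_pos h', Set.mem_union, Set.mem_insert_iff,
        Set.mem_singleton_iff, Set.mem_setOf_eq] at hvi hvi'
      rcases hvi with ((h5|h5|h5)|⟨c,hc,-⟩)|⟨c,hc,-⟩
      · exact haZ _ ((Sum.inl.inj (hvi'.symm.trans h5)) ▸ zE_mem ⟨i', h'⟩)
      · exact hbZ _ ((Sum.inl.inj (hvi'.symm.trans h5)) ▸ zE_mem ⟨i', h'⟩)
      · exact hwV _ ((Sum.inl.inj (hvi'.symm.trans h5)) ▸ ((zmem _).mp (zE_mem ⟨i', h'⟩)).1)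
      · rw [hvi'] at hc; exact absurd hc (by simp)
      · rw [hvi'] at hc; exact absurd hc (by simp)
    · simp only [hS, dif_neg h, dif_neg h', Set.mem_union, Set.mem_insert_iff,
        Set.mem_singleton_iff, Set.mem_setOf_eq] at hvi hvi'
      rcases hvi with ((h4|h4|h4)|⟨c,hc,hcadj⟩)|⟨c,hc,hcadj⟩ <;>
        rcases hvi' with ((h5|h5|h5)|⟨c',hc',hcadj'⟩)|⟨c',hc',hcadj'⟩
      · refine hij ?_ h h'
        apply hαinj
        apply cQ.enum_inj
        rw [← haF1, ← haF1]
        exact congrArg Prod.fst (Sum.inl.inj (h4.symm.trans h5))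
      · exact absurd (Sum.inl.inj (h4.symm.trans h5)) (hab _ _)
      · exact absurd (congrArg Prod.fst (Sum.inl.inj (h4.symm.trans h5))) (haw _)
      · rw [h4] at hc'; exact absurd hc' (by simp)
      · rw [h4] at hc'; exact absurd hc' (by simp)
      · exact absurd (Sum.inl.inj (h5.symm.trans h4)) (hab _ _)
      · refine hij ?_ h h'
        apply hβinj
        apply cQ'.enum_inj
        rw [← hbF1, ← hbF1]
        exact congrArg Prod.fst (Sum.inl.inj (h4.symm.trans h5))
      · exact absurd (congrArg Prod.fst (Sum.inl.inj (h4.symm.trans h5))) (hbw _)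
      · rw [h4] at hc'; exact absurd hc' (by simp)
      · rw [h4] at hc'; exact absurd hc' (by simp)
      · exact absurd (congrArg Prod.fst (Sum.inl.inj (h5.symm.trans h4))) (haw _)
      · exact absurd (congrArg Prod.fst (Sum.inl.inj (h5.symm.trans h4))) (hbw _)
      · refine hij ?_ h h'
        have h6 : wF (jdx i) = wF (jdx i') := Sum.inl.inj (h4.symm.trans h5)
        exact hρinj (congrArg Prod.snd h6)
      · rw [h4] at hc'; exact absurd hc' (by simp)
      · rw [h4] at hc'; exact absurd hc' (by simp)
      · rw [h5] at hc; exact absurd hc (by simp)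
      · rw [h5] at hc; exact absurd hc (by simp)
      · rw [h5] at hc; exact absurd hc (by simp)
      · refine hij ?_ h h'
        have h6 : c = c' := by
          have := hc.symm.trans hc'
          exact (Prod.mk.injEq _ _ _ _ ▸ Sum.inr.inj this).2
        have h7 : wF (jdx i) = wF (jdx i') :=
          cQ.nbr_uniq c _ _ hcadj (h6 ▸ hcadj') rfl
        exact hρinj (congrArg Prod.snd h7)
      · exfalso
        first
        | exact hQQ (congrArg Prod.fst (Sum.inr.inj (hc.symm.trans hc')))
        | exact hQQ (congrArg Prod.fst (Sum.inr.inj (hc.symm.trans hc'))).symm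
      · rw [h5] at hc; exact absurd hc (by simp)
      · rw [h5] at hc; exact absurd hc (by simp)
      · rw [h5] at hc; exact absurd hc (by simp)
      · exfalso
        first
        | exact hQQ (congrArg Prod.fst (Sum.inr.inj (hc.symm.trans hc')))
        | exact hQQ (congrArg Prod.fst (Sum.inr.inj (hc.symm.trans hc'))).symm
      · refine hij ?_ h h'
        have h6 : c = c' := by
          have := hc.symm.trans hc'
          exact (Prod.mk.injEq _ _ _ _ ▸ Sum.inr.inj this).2
        have h7 : wF (jdx i) = wF (jdx i') :=
          cQ'.nbr_uniq c _ _ hcadj (h6 ▸ hcadj') rfl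
        exact hρinj (congrArg Prod.snd h7)
  by_cases hCD : r + 2 ≤ m
  · -- Case C : `ys ≠ ys'` and at least two non-short paths needed
    have hysZ : ys ∉ ZF := fun h => hBC (ysZ.mp h)
    have hys'Z : ys' ∉ ZF := fun h => hBC (ys'Z.mp h)
    have hiQZ : iQ ∉ ZF.image gidx := by
      intro h
      obtain ⟨z, hz, hgz⟩ := Finset.mem_image.mp h
      have hz1 : cQ.enum (gidx z) = z.1 := gidx_spec z (gidx_ex z ((zmem z).mp hz).1)
      have hzp : z.1 = p1 := by rw [← hz1, hgz, hiQ]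
      have : z = ys := cQ.nbr_uniq V z ys ((zmem z).mp hz).1 hysV (by rw [hzp, hys1])
      exact hysZ (this ▸ hz)
    have hiQ'Z : iQ' ∉ ZF.image gidx' := by
      intro h
      obtain ⟨z, hz, hgz⟩ := Finset.mem_image.mp h
      have hz1 : cQ'.enum (gidx' z) = z.1 := gidx'_spec z (gidx_ex' z ((zmem z).mp hz).2)
      have hzp : z.1 = p1 := by rw [← hz1, hgz, hiQ']
      have : z = ys' := cQ'.nbr_uniq V' z ys' ((zmem z).mp hz).2 hys'V' (by rw [hzp, hys'1])
      exact hys'Z (this ▸ hz)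
    have hysV'n : ¬ adjH ys (Q', V') := fun h =>
      hBC (cQ'.nbr_uniq V' ys ys' h hys'V' (by rw [hys1, hys'1]))
    have hys'Vn : ¬ adjH ys' (Q, V) := fun h =>
      hBC (cQ.nbr_uniq V ys ys' hysV h (by rw [hys1, hys'1]))
    obtain ⟨ρ, hρinj, hρav⟩ := exists_avoid (N := k) (n := m - r - 2)
      ({ys.2, ys'.2} : Finset (Fin k))
      (by
        have hcard : ({ys.2, ys'.2} : Finset (Fin k)).card ≤ 2 :=
          (Finset.card_insert_le _ _).trans (by simp)
        omega)
    obtain ⟨α, hαinj, hαav⟩ := exists_avoid (N := Δ) (n := m - r - 1)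
      (insert iQ (ZF.image gidx))
      (by
        have hcard : (insert iQ (ZF.image gidx)).card ≤ r + 1 :=
          (Finset.card_insert_le _ _).trans (by omega)
        omega)
    obtain ⟨β, hβinj, hβav⟩ := exists_avoid (N := Δ) (n := m - r - 1)
      (insert iQ' (ZF.image gidx'))
      (by
        have hcard : (insert iQ' (ZF.image gidx')).card ≤ r + 1 :=
          (Finset.card_insert_le _ _).trans (by omega)
        omega)
    have hk0 : 0 < k := by omega
    set ρ' : ℕ → Fin k := fun n => if h : n < m - r - 2 then ρ ⟨n, h⟩ else ⟨0, hk0⟩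
      with hρ'
    set α' : ℕ → Fin Δ := fun n => if h : n < m - r - 1 then α ⟨n, h⟩ else ⟨0, hΔ0⟩
      with hα'
    set β' : ℕ → Fin Δ := fun n => if h : n < m - r - 1 then β ⟨n, h⟩ else ⟨0, hΔ0⟩
      with hβ'
    have hρ'inj : ∀ n n', n < m - r - 2 → n' < m - r - 2 → ρ' n = ρ' n' → n = n' := by
      intro n n' hn hn' h
      simp only [hρ', dif_pos hn, dif_pos hn'] at h
      simpa using congrArg Fin.val (hρinj h)
    have hρ'av : ∀ n, n < m - r - 2 → ρ' n ∉ ({ys.2, ys'.2} : Finset (Fin k)) := by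
      intro n hn
      simp only [hρ', dif_pos hn]
      exact hρav _
    have hα'inj : ∀ n n', n < m - r - 1 → n' < m - r - 1 → α' n = α' n' → n = n' := by
      intro n n' hn hn' h
      simp only [hα', dif_pos hn, dif_pos hn'] at h
      simpa using congrArg Fin.val (hαinj h)
    have hα'av : ∀ n, n < m - r - 1 → α' n ∉ insert iQ (ZF.image gidx) := by
      intro n hn
      simp only [hα', dif_pos hn]
      exact hαav _
    have hβ'inj : ∀ n n', n < m - r - 1 → n' < m - r - 1 → β' n = β' n' → n = n' := by
      intro n n' hn hn' h
      simp only [hβ', dif_pos hn, dif_pos hn'] at h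
      simpa using congrArg Fin.val (hβinj h)
    have hβ'av : ∀ n, n < m - r - 1 → β' n ∉ insert iQ' (ZF.image gidx') := by
      intro n hn
      simp only [hβ', dif_pos hn]
      exact hβav _
    choose aN haN1 haN2 using fun n : ℕ => cQ.nbr_exists V (α' n)
    choose bN hbN1 hbN2 using fun n : ℕ => cQ'.nbr_exists V' (β' n)
    set wN : ℕ → ν0 × Fin k := fun n => (p1, ρ' n) with hwN
    have haw : ∀ n, n < m - r - 1 → (aN n).1 ≠ p1 := by
      intro n hn h
      have hji : α' n = iQ := cQ.enum_inj (by rw [← haN1 n, h, hiQ])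
      exact hα'av n hn (by rw [hji]; exact Finset.mem_insert_self iQ _)
    have hbw : ∀ n, n < m - r - 1 → (bN n).1 ≠ p1 := by
      intro n hn h
      have hji : β' n = iQ' := cQ'.enum_inj (by rw [← hbN1 n, h, hiQ'])
      exact hβ'av n hn (by rw [hji]; exact Finset.mem_insert_self iQ' _)
    have haZ : ∀ n, n < m - r - 1 → aN n ∉ ZF :=
      fun n hn => notZQ _ (α' n) (haN1 n)
        (fun hmem => hα'av n hn (Finset.mem_insert_of_mem hmem))
    have hbZ : ∀ n, n < m - r - 1 → bN n ∉ ZF :=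
      fun n hn => notZQ' _ (β' n) (hbN1 n)
        (fun hmem => hβ'av n hn (Finset.mem_insert_of_mem hmem))
    have hab : ∀ n n', n < m - r - 1 → n' < m - r - 1 → aN n ≠ bN n' := by
      intro n n' hn hn' h
      exact haZ n hn ((zmem _).mpr ⟨haN2 n, by rw [h]; exact hbN2 n'⟩)
    have haa : ∀ n n', n < m - r - 1 → n' < m - r - 1 → aN n = aN n' → n = n' := by
      intro n n' hn hn' h
      exact hα'inj n n' hn hn' (cQ.enum_inj (by rw [← haN1, ← haN1, h]))
    have hbb : ∀ n n', n < m - r - 1 → n' < m - r - 1 → bN n = bN n' → n = n' := by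
      intro n n' hn hn' h
      exact hβ'inj n n' hn hn' (cQ'.enum_inj (by rw [← hbN1, ← hbN1, h]))
    have hww : ∀ n n', n < m - r - 2 → n' < m - r - 2 → wN n = wN n' → n = n' := by
      intro n n' hn hn' h
      exact hρ'inj n n' hn hn' (congrArg Prod.snd h)
    have hwVf : ∀ n, n < m - r - 2 → ¬ adjH (wN n) (Q, V) := by
      intro n hn h
      have heq : wN n = ys := cQ.nbr_uniq V _ _ h hysV hys1.symm
      exact hρ'av n hn (by
        rw [Finset.mem_insert]
        exact Or.inl (congrArg Prod.snd heq))
    have hwV'f : ∀ n, n < m - r - 2 → ¬ adjH (wN n) (Q', V') := by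
      intro n hn h
      have heq : wN n = ys' := cQ'.nbr_uniq V' _ _ h hys'V' hys'1.symm
      exact hρ'av n hn (by
        rw [Finset.mem_insert, Finset.mem_singleton]
        exact Or.inr (congrArg Prod.snd heq))
    have hysw : ∀ n, n < m - r - 2 → ys ≠ wN n := by
      intro n hn h
      exact hρ'av n hn (by
        rw [Finset.mem_insert]
        exact Or.inl (congrArg Prod.snd h).symm)
    have hys'w : ∀ n, n < m - r - 2 → ys' ≠ wN n := by
      intro n hn h
      exact hρ'av n hn (by
        rw [Finset.mem_insert, Finset.mem_singleton]
        exact Or.inr (congrArg Prod.snd h).symm)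
    have hblkQ : ∀ (u u' : ν0 × Fin k) (c : βT), u.1 = p1 → u'.1 = p1 →
        adjH u (Q, c) → adjH u' (Q, c) → u = u' :=
      fun u u' c h1 h1' h3 h4 => cQ.nbr_uniq c u u' h3 h4 (h1.trans h1'.symm)
    have hblkQ' : ∀ (u u' : ν0 × Fin k) (c : βT), u.1 = p1 → u'.1 = p1 →
        adjH u (Q', c) → adjH u' (Q', c) → u = u' :=
      fun u u' c h1 h1' h3 h4 => cQ'.nbr_uniq c u u' h3 h4 (h1.trans h1'.symm)
    have h0lt : 0 < m - r - 1 := by omega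
    set S : Fin m → Set ((ν0 × Fin k) ⊕ (β0 × βT)) := fun i =>
      if h : (i : ℕ) < r then {Sum.inl (zE ⟨i, h⟩)}
      else if (i : ℕ) = r then
        {Sum.inl ys, Sum.inl (bN 0)} ∪
          {v | ∃ c, v = Sum.inr (Q', c) ∧ adjH ys (Q', c)}
      else if (i : ℕ) = r + 1 then
        {Sum.inl ys', Sum.inl (aN 0)} ∪
          {v | ∃ c, v = Sum.inr (Q, c) ∧ adjH ys' (Q, c)}
      else
        {Sum.inl (aN ((i : ℕ) - r - 1)), Sum.inl (bN ((i : ℕ) - r - 1)),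
            Sum.inl (wN ((i : ℕ) - r - 2))} ∪
          {v | ∃ c, v = Sum.inr (Q, c) ∧ adjH (wN ((i : ℕ) - r - 2)) (Q, c)} ∪
          {v | ∃ c, v = Sum.inr (Q', c) ∧ adjH (wN ((i : ℕ) - r - 2)) (Q', c)} with hS
    have ex : ∀ i : Fin m, ∃ wk : (bipGraph adjH).Walk (Sum.inr (Q, V)) (Sum.inr (Q', V')),
        wk.IsPath ∧ wk.length ≤ 6 ∧
        ∀ v ∈ wk.support, v = Sum.inr (Q, V) ∨ v = Sum.inr (Q', V') ∨ v ∈ S i := by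
      intro i
      by_cases h : (i : ℕ) < r
      · obtain ⟨wk, h1, h2', h3⟩ := shape_short hQQ (zE ⟨i, h⟩)
          ((zmem _).mp (zE_mem _)).1 ((zmem _).mp (zE_mem _)).2
        refine ⟨wk, h1, h2', fun v hv => ?_⟩
        rcases h3 v hv with h4|h4|h4
        · exact Or.inl h4
        · exact Or.inr (Or.inl h4)
        · refine Or.inr (Or.inr ?_)
          simp only [hS, dif_pos h, Set.mem_singleton_iff]
          exact h4
      · by_cases hR : (i : ℕ) = r
        · obtain ⟨wk, h1, h2', h3⟩ := shape_viaS hQQ cQ' hp1' ys (bN 0)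
            hysV (hbN2 0) hys1 (hbw 0 h0lt) hysV'n (h2.supp _ Q' V' (hbN2 0))
          refine ⟨wk, h1, h2', fun v hv => ?_⟩
          rcases h3 v hv with h4|h4|h4|h4|h4
          · exact Or.inl h4
          · exact Or.inr (Or.inl h4)
          all_goals refine Or.inr (Or.inr ?_)
          all_goals simp only [hS, dif_neg h, if_pos hR, Set.mem_union,
            Set.mem_insert_iff, Set.mem_singleton_iff, Set.mem_setOf_eq]
          · exact Or.inl (Or.inl h4)
          · exact Or.inl (Or.inr h4)
          · exact Or.inr h4
        · by_cases hR1 : (i : ℕ) = r + 1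
          · obtain ⟨wk, h1, h2', h3⟩ := shape_viaT hQQ cQ hp1 (aN 0) ys'
              (haN2 0) hys'V' hys'1 (haw 0 h0lt) hys'Vn (h2.supp _ Q V (haN2 0))
            refine ⟨wk, h1, h2', fun v hv => ?_⟩
            rcases h3 v hv with h4|h4|h4|h4|h4
            · exact Or.inl h4
            · exact Or.inr (Or.inl h4)
            all_goals refine Or.inr (Or.inr ?_)
            all_goals simp only [hS, dif_neg h, if_neg hR, if_pos hR1, Set.mem_union,
              Set.mem_insert_iff, Set.mem_singleton_iff, Set.mem_setOf_eq]
            · exact Or.inl (Or.inl h4)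
            · exact Or.inl (Or.inr h4)
            · exact Or.inr h4
          · have him := i.isLt
            have hn1 : (i : ℕ) - r - 1 < m - r - 1 := by omega
            have hn2 : (i : ℕ) - r - 2 < m - r - 2 := by omega
            obtain ⟨wk, h1, h2', h3⟩ := shape_full hQQ cQ cQ' hp1 hp1'
              (aN ((i : ℕ) - r - 1)) (wN ((i : ℕ) - r - 2)) (bN ((i : ℕ) - r - 1))
              (haN2 _) (hbN2 _) rfl (haw _ hn1) (hbw _ hn1) (hwVf _ hn2) (hwV'f _ hn2)
              (hab _ _ hn1 hn1) (h2.supp _ Q V (haN2 _)) (h2.supp _ Q' V' (hbN2 _))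
            refine ⟨wk, h1, h2', fun v hv => ?_⟩
            rcases h3 v hv with h4|h4|h4|h4|h4|h4|h4
            · exact Or.inl h4
            · exact Or.inr (Or.inl h4)
            all_goals refine Or.inr (Or.inr ?_)
            all_goals simp only [hS, dif_neg h, if_neg hR, if_neg hR1, Set.mem_union,
              Set.mem_insert_iff, Set.mem_singleton_iff, Set.mem_setOf_eq]
            · exact Or.inl (Or.inl (Or.inl h4))
            · exact Or.inl (Or.inl (Or.inr (Or.inl h4)))
            · exact Or.inl (Or.inl (Or.inr (Or.inr h4)))
            · exact Or.inl (Or.inr h4)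
            · exact Or.inr h4
    choose p hp using ex
    refine ⟨p, fun i => ⟨(hp i).1, (hp i).2.1⟩, ?_⟩
    apply pid_of_subsets S (fun i => (hp i).2.2)
    intro i i' v hvi hvi' hvs hvt
    have him := i.isLt
    have him' := i'.isLt
    by_cases h : (i : ℕ) < r <;> by_cases h' : (i' : ℕ) < r
    · -- short-short
      simp only [hS, dif_pos h, dif_pos h', Set.mem_singleton_iff] at hvi hvi'
      have h6 := zE_inj (Sum.inl.inj (hvi.symm.trans hvi'))
      exact Fin.ext (by simpa using congrArg Fin.val h6)
    · -- short i, non-short i'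
      exfalso
      simp only [hS, dif_pos h, Set.mem_singleton_iff] at hvi
      have hzEZ := zE_mem (⟨(i : ℕ), h⟩ : Fin r)
      by_cases hR' : (i' : ℕ) = r
      · simp only [hS, dif_neg h', if_pos hR', Set.mem_union, Set.mem_insert_iff,
          Set.mem_singleton_iff, Set.mem_setOf_eq] at hvi'
        rcases hvi' with (h5|h5)|⟨c,hc,-⟩
        · exact hysZ ((Sum.inl.inj (hvi.symm.trans h5)) ▸ hzEZ)
        · exact hbZ 0 h0lt ((Sum.inl.inj (hvi.symm.trans h5)) ▸ hzEZ)
        · rw [hvi] at hc; exact absurd hc (by simp)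
      · by_cases hR1' : (i' : ℕ) = r + 1
        · simp only [hS, dif_neg h', if_neg hR', if_pos hR1', Set.mem_union,
            Set.mem_insert_iff, Set.mem_singleton_iff, Set.mem_setOf_eq] at hvi'
          rcases hvi' with (h5|h5)|⟨c,hc,-⟩
          · exact hys'Z ((Sum.inl.inj (hvi.symm.trans h5)) ▸ hzEZ)
          · exact haZ 0 h0lt ((Sum.inl.inj (hvi.symm.trans h5)) ▸ hzEZ)
          · rw [hvi] at hc; exact absurd hc (by simp)
        · have hn1' : (i' : ℕ) - r - 1 < m - r - 1 := by omega
          have hn2' : (i' : ℕ) - r - 2 < m - r - 2 := by omega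
          simp only [hS, dif_neg h', if_neg hR', if_neg hR1', Set.mem_union,
            Set.mem_insert_iff, Set.mem_singleton_iff, Set.mem_setOf_eq] at hvi'
          rcases hvi' with ((h5|h5|h5)|⟨c,hc,-⟩)|⟨c,hc,-⟩
          · exact haZ _ hn1' ((Sum.inl.inj (hvi.symm.trans h5)) ▸ hzEZ)
          · exact hbZ _ hn1' ((Sum.inl.inj (hvi.symm.trans h5)) ▸ hzEZ)
          · exact hwVf _ hn2' ((Sum.inl.inj (hvi.symm.trans h5)) ▸ ((zmem _).mp hzEZ).1)
          · rw [hvi] at hc; exact absurd hc (by simp)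
          · rw [hvi] at hc; exact absurd hc (by simp)
    · -- non-short i, short i'
      exfalso
      simp only [hS, dif_pos h', Set.mem_singleton_iff] at hvi'
      have hzEZ := zE_mem (⟨(i' : ℕ), h'⟩ : Fin r)
      by_cases hR : (i : ℕ) = r
      · simp only [hS, dif_neg h, if_pos hR, Set.mem_union, Set.mem_insert_iff,
          Set.mem_singleton_iff, Set.mem_setOf_eq] at hvi
        rcases hvi with (h5|h5)|⟨c,hc,-⟩
        · exact hysZ ((Sum.inl.inj (hvi'.symm.trans h5)) ▸ hzEZ)
        · exact hbZ 0 h0lt ((Sum.inl.inj (hvi'.symm.trans h5)) ▸ hzEZ)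
        · rw [hvi'] at hc; exact absurd hc (by simp)
      · by_cases hR1 : (i : ℕ) = r + 1
        · simp only [hS, dif_neg h, if_neg hR, if_pos hR1, Set.mem_union,
            Set.mem_insert_iff, Set.mem_singleton_iff, Set.mem_setOf_eq] at hvi
          rcases hvi with (h5|h5)|⟨c,hc,-⟩
          · exact hys'Z ((Sum.inl.inj (hvi'.symm.trans h5)) ▸ hzEZ)
          · exact haZ 0 h0lt ((Sum.inl.inj (hvi'.symm.trans h5)) ▸ hzEZ)
          · rw [hvi'] at hc; exact absurd hc (by simp)
        · have hn1 : (i : ℕ) - r - 1 < m - r - 1 := by omega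
          have hn2 : (i : ℕ) - r - 2 < m - r - 2 := by omega
          simp only [hS, dif_neg h, if_neg hR, if_neg hR1, Set.mem_union,
            Set.mem_insert_iff, Set.mem_singleton_iff, Set.mem_setOf_eq] at hvi
          rcases hvi with ((h5|h5|h5)|⟨c,hc,-⟩)|⟨c,hc,-⟩
          · exact haZ _ hn1 ((Sum.inl.inj (hvi'.symm.trans h5)) ▸ hzEZ)
          · exact hbZ _ hn1 ((Sum.inl.inj (hvi'.symm.trans h5)) ▸ hzEZ)
          · exact hwVf _ hn2 ((Sum.inl.inj (hvi'.symm.trans h5)) ▸ ((zmem _).mp hzEZ).1)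
          · rw [hvi'] at hc; exact absurd hc (by simp)
          · rw [hvi'] at hc; exact absurd hc (by simp)
    · -- both non-short
      by_cases hR : (i : ℕ) = r <;> by_cases hR' : (i' : ℕ) = r
      · exact Fin.ext (hR.trans hR'.symm)
      · -- i = r (viaS), i' ≠ r
        exfalso
        simp only [hS, dif_neg h, if_pos hR, Set.mem_union, Set.mem_insert_iff,
          Set.mem_singleton_iff, Set.mem_setOf_eq] at hvi
        by_cases hR1' : (i' : ℕ) = r + 1
        · simp only [hS, dif_neg h', if_neg hR', if_pos hR1', Set.mem_union,
            Set.mem_insert_iff, Set.mem_singleton_iff, Set.mem_setOf_eq] at hvi'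
          rcases hvi with (h4|h4)|⟨c,hc,hcadj⟩ <;> rcases hvi' with (h5|h5)|⟨c',hc',hcadj'⟩
          · exact hBC (Sum.inl.inj (h4.symm.trans h5))
          · exact haw 0 h0lt (congrArg Prod.fst (Sum.inl.inj (h5.symm.trans h4)) |>.trans hys1)
          · rw [h4] at hc'; exact absurd hc' (by simp)
          · exact hbw 0 h0lt (congrArg Prod.fst (Sum.inl.inj (h4.symm.trans h5)) |>.trans hys'1)
          · exact hab 0 0 h0lt h0lt (Sum.inl.inj (h5.symm.trans h4))
          · rw [h4] at hc'; exact absurd hc' (by simp)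
          · rw [h5] at hc; exact absurd hc (by simp)
          · rw [h5] at hc; exact absurd hc (by simp)
          · exact hQQ (congrArg Prod.fst (Sum.inr.inj (hc'.symm.trans hc)))
        · have hn1' : (i' : ℕ) - r - 1 < m - r - 1 := by omega
          have hn2' : (i' : ℕ) - r - 2 < m - r - 2 := by omega
          have hne1' : 1 ≤ (i' : ℕ) - r - 1 := by omega
          simp only [hS, dif_neg h', if_neg hR', if_neg hR1', Set.mem_union,
            Set.mem_insert_iff, Set.mem_singleton_iff, Set.mem_setOf_eq] at hvi'
          rcases hvi with (h4|h4)|⟨c,hc,hcadj⟩ <;>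
            rcases hvi' with ((h5|h5|h5)|⟨c',hc',hcadj'⟩)|⟨c',hc',hcadj'⟩
          · exact haw _ hn1' (congrArg Prod.fst (Sum.inl.inj (h5.symm.trans h4)) |>.trans hys1)
          · exact hbw _ hn1' (congrArg Prod.fst (Sum.inl.inj (h5.symm.trans h4)) |>.trans hys1)
          · exact hysw _ hn2' (Sum.inl.inj (h4.symm.trans h5))
          · rw [h4] at hc'; exact absurd hc' (by simp)
          · rw [h4] at hc'; exact absurd hc' (by simp)
          · exact hab _ _ hn1' h0lt (Sum.inl.inj (h5.symm.trans h4))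
          · have h6 := hbb _ _ h0lt hn1' (Sum.inl.inj (h4.symm.trans h5))
            omega
          · exact hbw 0 h0lt (congrArg Prod.fst (Sum.inl.inj (h4.symm.trans h5)) |>.trans rfl)
          · rw [h4] at hc'; exact absurd hc' (by simp)
          · rw [h4] at hc'; exact absurd hc' (by simp)
          · rw [h5] at hc; exact absurd hc (by simp)
          · rw [h5] at hc; exact absurd hc (by simp)
          · rw [h5] at hc; exact absurd hc (by simp)
          · exact hQQ (congrArg Prod.fst (Sum.inr.inj (hc'.symm.trans hc)))
          · have h6 : c = c' := (Prod.mk.injEq _ _ _ _ ▸ Sum.inr.inj (hc.symm.trans hc')).2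
            exact hysw _ hn2' (hblkQ' ys (wN _) c hys1 rfl hcadj (h6 ▸ hcadj'))
      · -- i ≠ r, i' = r (viaS)
        exfalso
        simp only [hS, dif_neg h', if_pos hR', Set.mem_union, Set.mem_insert_iff,
          Set.mem_singleton_iff, Set.mem_setOf_eq] at hvi'
        by_cases hR1 : (i : ℕ) = r + 1
        · simp only [hS, dif_neg h, if_neg hR, if_pos hR1, Set.mem_union,
            Set.mem_insert_iff, Set.mem_singleton_iff, Set.mem_setOf_eq] at hvi
          rcases hvi' with (h4|h4)|⟨c,hc,hcadj⟩ <;> rcases hvi with (h5|h5)|⟨c',hc',hcadj'⟩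
          · exact hBC (Sum.inl.inj (h4.symm.trans h5))
          · exact haw 0 h0lt (congrArg Prod.fst (Sum.inl.inj (h5.symm.trans h4)) |>.trans hys1)
          · rw [h4] at hc'; exact absurd hc' (by simp)
          · exact hbw 0 h0lt (congrArg Prod.fst (Sum.inl.inj (h4.symm.trans h5)) |>.trans hys'1)
          · exact hab 0 0 h0lt h0lt (Sum.inl.inj (h5.symm.trans h4))
          · rw [h4] at hc'; exact absurd hc' (by simp)
          · rw [h5] at hc; exact absurd hc (by simp)
          · rw [h5] at hc; exact absurd hc (by simp)
          · exact hQQ (congrArg Prod.fst (Sum.inr.inj (hc'.symm.trans hc)))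
        · have hn1 : (i : ℕ) - r - 1 < m - r - 1 := by omega
          have hn2 : (i : ℕ) - r - 2 < m - r - 2 := by omega
          have hne1 : 1 ≤ (i : ℕ) - r - 1 := by omega
          simp only [hS, dif_neg h, if_neg hR, if_neg hR1, Set.mem_union,
            Set.mem_insert_iff, Set.mem_singleton_iff, Set.mem_setOf_eq] at hvi
          rcases hvi' with (h4|h4)|⟨c,hc,hcadj⟩ <;>
            rcases hvi with ((h5|h5|h5)|⟨c',hc',hcadj'⟩)|⟨c',hc',hcadj'⟩
          · exact haw _ hn1 (congrArg Prod.fst (Sum.inl.inj (h5.symm.trans h4)) |>.trans hys1)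
          · exact hbw _ hn1 (congrArg Prod.fst (Sum.inl.inj (h5.symm.trans h4)) |>.trans hys1)
          · exact hysw _ hn2 (Sum.inl.inj (h4.symm.trans h5))
          · rw [h4] at hc'; exact absurd hc' (by simp)
          · rw [h4] at hc'; exact absurd hc' (by simp)
          · exact hab _ _ hn1 h0lt (Sum.inl.inj (h5.symm.trans h4))
          · have h6 := hbb _ _ h0lt hn1 (Sum.inl.inj (h4.symm.trans h5))
            omega
          · exact hbw 0 h0lt (congrArg Prod.fst (Sum.inl.inj (h4.symm.trans h5)) |>.trans rfl)
          · rw [h4] at hc'; exact absurd hc' (by simp)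
          · rw [h4] at hc'; exact absurd hc' (by simp)
          · rw [h5] at hc; exact absurd hc (by simp)
          · rw [h5] at hc; exact absurd hc (by simp)
          · rw [h5] at hc; exact absurd hc (by simp)
          · exact hQQ (congrArg Prod.fst (Sum.inr.inj (hc'.symm.trans hc)))
          · have h6 : c = c' := (Prod.mk.injEq _ _ _ _ ▸ Sum.inr.inj (hc.symm.trans hc')).2
            exact hysw _ hn2 (hblkQ' ys (wN _) c hys1 rfl hcadj (h6 ▸ hcadj'))
      · -- neither is r
        by_cases hR1 : (i : ℕ) = r + 1 <;> by_cases hR1' : (i' : ℕ) = r + 1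
        · exact Fin.ext (hR1.trans hR1'.symm)
        · -- i = r+1 (viaT), i' full
          exfalso
          have hn1' : (i' : ℕ) - r - 1 < m - r - 1 := by omega
          have hn2' : (i' : ℕ) - r - 2 < m - r - 2 := by omega
          have hne1' : 1 ≤ (i' : ℕ) - r - 1 := by omega
          simp only [hS, dif_neg h, if_neg hR, if_pos hR1, Set.mem_union,
            Set.mem_insert_iff, Set.mem_singleton_iff, Set.mem_setOf_eq] at hvi
          simp only [hS, dif_neg h', if_neg hR', if_neg hR1', Set.mem_union,
            Set.mem_insert_iff, Set.mem_singleton_iff, Set.mem_setOf_eq] at hvi'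
          rcases hvi with (h4|h4)|⟨c,hc,hcadj⟩ <;>
            rcases hvi' with ((h5|h5|h5)|⟨c',hc',hcadj'⟩)|⟨c',hc',hcadj'⟩
          · exact haw _ hn1' (congrArg Prod.fst (Sum.inl.inj (h5.symm.trans h4)) |>.trans hys'1)
          · exact hbw _ hn1' (congrArg Prod.fst (Sum.inl.inj (h5.symm.trans h4)) |>.trans hys'1)
          · exact hys'w _ hn2' (Sum.inl.inj (h4.symm.trans h5))
          · rw [h4] at hc'; exact absurd hc' (by simp)
          · rw [h4] at hc'; exact absurd hc' (by simp)
          · have h6 := haa _ _ h0lt hn1' (Sum.inl.inj (h4.symm.trans h5))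
            omega
          · exact hab _ _ h0lt hn1' (Sum.inl.inj (h4.symm.trans h5))
          · exact haw 0 h0lt (congrArg Prod.fst (Sum.inl.inj (h4.symm.trans h5)) |>.trans rfl)
          · rw [h4] at hc'; exact absurd hc' (by simp)
          · rw [h4] at hc'; exact absurd hc' (by simp)
          · rw [h5] at hc; exact absurd hc (by simp)
          · rw [h5] at hc; exact absurd hc (by simp)
          · rw [h5] at hc; exact absurd hc (by simp)
          · have h6 : c = c' := (Prod.mk.injEq _ _ _ _ ▸ Sum.inr.inj (hc.symm.trans hc')).2
            exact hys'w _ hn2' (hblkQ ys' (wN _) c hys'1 rfl hcadj (h6 ▸ hcadj'))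
          · exact hQQ (congrArg Prod.fst (Sum.inr.inj (hc.symm.trans hc')))
        · -- i full, i' = r+1 (viaT)
          exfalso
          have hn1 : (i : ℕ) - r - 1 < m - r - 1 := by omega
          have hn2 : (i : ℕ) - r - 2 < m - r - 2 := by omega
          have hne1 : 1 ≤ (i : ℕ) - r - 1 := by omega
          simp only [hS, dif_neg h', if_neg hR', if_pos hR1', Set.mem_union,
            Set.mem_insert_iff, Set.mem_singleton_iff, Set.mem_setOf_eq] at hvi'
          simp only [hS, dif_neg h, if_neg hR, if_neg hR1, Set.mem_union,
            Set.mem_insert_iff, Set.mem_singleton_iff, Set.mem_setOf_eq] at hvi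
          rcases hvi' with (h4|h4)|⟨c,hc,hcadj⟩ <;>
            rcases hvi with ((h5|h5|h5)|⟨c',hc',hcadj'⟩)|⟨c',hc',hcadj'⟩
          · exact haw _ hn1 (congrArg Prod.fst (Sum.inl.inj (h5.symm.trans h4)) |>.trans hys'1)
          · exact hbw _ hn1 (congrArg Prod.fst (Sum.inl.inj (h5.symm.trans h4)) |>.trans hys'1)
          · exact hys'w _ hn2 (Sum.inl.inj (h4.symm.trans h5))
          · rw [h4] at hc'; exact absurd hc' (by simp)
          · rw [h4] at hc'; exact absurd hc' (by simp)
          · have h6 := haa _ _ h0lt hn1 (Sum.inl.inj (h4.symm.trans h5))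
            omega
          · exact hab _ _ h0lt hn1 (Sum.inl.inj (h4.symm.trans h5))
          · exact haw 0 h0lt (congrArg Prod.fst (Sum.inl.inj (h4.symm.trans h5)) |>.trans rfl)
          · rw [h4] at hc'; exact absurd hc' (by simp)
          · rw [h4] at hc'; exact absurd hc' (by simp)
          · rw [h5] at hc; exact absurd hc (by simp)
          · rw [h5] at hc; exact absurd hc (by simp)
          · rw [h5] at hc; exact absurd hc (by simp)
          · have h6 : c = c' := (Prod.mk.injEq _ _ _ _ ▸ Sum.inr.inj (hc.symm.trans hc')).2
            exact hys'w _ hn2 (hblkQ ys' (wN _) c hys'1 rfl hcadj (h6 ▸ hcadj'))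
          · exact hQQ (congrArg Prod.fst (Sum.inr.inj (hc.symm.trans hc')))
        · -- both full
          have hn1 : (i : ℕ) - r - 1 < m - r - 1 := by omega
          have hn2 : (i : ℕ) - r - 2 < m - r - 2 := by omega
          have hn1' : (i' : ℕ) - r - 1 < m - r - 1 := by omega
          have hn2' : (i' : ℕ) - r - 2 < m - r - 2 := by omega
          simp only [hS, dif_neg h, if_neg hR, if_neg hR1, Set.mem_union,
            Set.mem_insert_iff, Set.mem_singleton_iff, Set.mem_setOf_eq] at hvi
          simp only [hS, dif_neg h', if_neg hR', if_neg hR1', Set.mem_union,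
            Set.mem_insert_iff, Set.mem_singleton_iff, Set.mem_setOf_eq] at hvi'
          rcases hvi with ((h4|h4|h4)|⟨c,hc,hcadj⟩)|⟨c,hc,hcadj⟩ <;>
            rcases hvi' with ((h5|h5|h5)|⟨c',hc',hcadj'⟩)|⟨c',hc',hcadj'⟩
          · have h6 := haa _ _ hn1 hn1' (Sum.inl.inj (h4.symm.trans h5))
            exact Fin.ext (by omega)
          · exact absurd (Sum.inl.inj (h4.symm.trans h5)) (hab _ _ hn1 hn1')
          · exfalso
            exact haw _ hn1 ((congrArg Prod.fst (Sum.inl.inj (h4.symm.trans h5))).trans rfl)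
          · exfalso; rw [h4] at hc'; exact absurd hc' (by simp)
          · exfalso; rw [h4] at hc'; exact absurd hc' (by simp)
          · exact absurd (Sum.inl.inj (h5.symm.trans h4)) (hab _ _ hn1' hn1)
          · have h6 := hbb _ _ hn1 hn1' (Sum.inl.inj (h4.symm.trans h5))
            exact Fin.ext (by omega)
          · exfalso
            exact hbw _ hn1 ((congrArg Prod.fst (Sum.inl.inj (h4.symm.trans h5))).trans rfl)
          · exfalso; rw [h4] at hc'; exact absurd hc' (by simp)
          · exfalso; rw [h4] at hc'; exact absurd hc' (by simp)
          · exfalso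
            exact haw _ hn1' ((congrArg Prod.fst (Sum.inl.inj (h5.symm.trans h4))).trans rfl)
          · exfalso
            exact hbw _ hn1' ((congrArg Prod.fst (Sum.inl.inj (h5.symm.trans h4))).trans rfl)
          · have h6 := hww _ _ hn2 hn2' (Sum.inl.inj (h4.symm.trans h5))
            exact Fin.ext (by omega)
          · exfalso; rw [h4] at hc'; exact absurd hc' (by simp)
          · exfalso; rw [h4] at hc'; exact absurd hc' (by simp)
          · exfalso; rw [h5] at hc; exact absurd hc (by simp)
          · exfalso; rw [h5] at hc; exact absurd hc (by simp)
          · exfalso; rw [h5] at hc; exact absurd hc (by simp)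
          · have h6 : c = c' := (Prod.mk.injEq _ _ _ _ ▸ Sum.inr.inj (hc.symm.trans hc')).2
            have h7 := hww _ _ hn2 hn2'
              (hblkQ (wN _) (wN _) c rfl rfl hcadj (h6 ▸ hcadj'))
            exact Fin.ext (by omega)
          · exfalso
            exact hQQ (congrArg Prod.fst (Sum.inr.inj (hc.symm.trans hc')))
          · exfalso; rw [h5] at hc; exact absurd hc (by simp)
          · exfalso; rw [h5] at hc; exact absurd hc (by simp)
          · exfalso; rw [h5] at hc; exact absurd hc (by simp)
          · exfalso
            exact hQQ (congrArg Prod.fst (Sum.inr.inj (hc'.symm.trans hc)))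
          · have h6 : c = c' := (Prod.mk.injEq _ _ _ _ ▸ Sum.inr.inj (hc.symm.trans hc')).2
            have h7 := hww _ _ hn2 hn2'
              (hblkQ' (wN _) (wN _) c rfl rfl hcadj (h6 ▸ hcadj'))
            exact Fin.ext (by omega)
  · -- Case D : `ys ≠ ys'` and exactly one non-short path needed (`m = r + 1`)
    have hmr : m = r + 1 := by omega
    have hysZ : ys ∉ ZF := fun h => hBC (ysZ.mp h)
    have hys'Z : ys' ∉ ZF := fun h => hBC (ys'Z.mp h)
    have hΔ1 : 1 < Δ := by omega
    have hk0 : 0 < k := by omega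
    have hk1 : 1 < k := by omega
    set γ' : Fin Δ := if iQ' = ⟨0, hΔ0⟩ then ⟨1, hΔ1⟩ else ⟨0, hΔ0⟩ with hγ'def
    have hγ' : γ' ≠ iQ' := by
      by_cases hcase : iQ' = ⟨0, hΔ0⟩
      · simp only [hγ'def, if_pos hcase]
        rw [hcase]
        intro hcon
        exact absurd (congrArg Fin.val hcon) (by simp)
      · simp only [hγ'def, if_neg hcase]
        exact fun hcon => hcase hcon.symm
    obtain ⟨bx, hbx1, hbx2⟩ := cQ'.nbr_exists V' γ'
    set x : ν0 × Fin k := (cQ'.enum γ', if bx.2 = ⟨0, hk0⟩ then ⟨1, hk1⟩ else ⟨0, hk0⟩)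
      with hxdef
    have hx2 : x.2 ≠ bx.2 := by
      by_cases hcase : bx.2 = ⟨0, hk0⟩
      · simp only [hxdef, if_pos hcase]
        rw [hcase]
        intro hcon
        exact absurd (congrArg Fin.val hcon) (by simp)
      · simp only [hxdef, if_neg hcase]
        exact fun hcon => hcase hcon.symm
    have hx0 : adj0 x.1 Q' := cQ'.enum_adj γ'
    have hx1 : x.1 ≠ p1 := fun h => hγ' (cQ'.enum_inj (h.trans hiQ'.symm))
    have hxt : ¬ adjH x (Q', V') := fun h =>
      hx2 (congrArg Prod.snd (cQ'.nbr_uniq V' x bx h hbx2 (by rw [hbx1])))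
    set S : Fin m → Set ((ν0 × Fin k) ⊕ (β0 × βT)) := fun i =>
      if h : (i : ℕ) < r then {Sum.inl (zE ⟨i, h⟩)}
      else
        {Sum.inl ys, Sum.inl ys', Sum.inl x} ∪ {v | ∃ c, v = Sum.inr (Q', c)} with hS
    have ex : ∀ i : Fin m, ∃ wk : (bipGraph adjH).Walk (Sum.inr (Q, V)) (Sum.inr (Q', V')),
        wk.IsPath ∧ wk.length ≤ 6 ∧
        ∀ v ∈ wk.support, v = Sum.inr (Q, V) ∨ v = Sum.inr (Q', V') ∨ v ∈ S i := by
      intro i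
      by_cases h : (i : ℕ) < r
      · obtain ⟨wk, h1, h2', h3⟩ := shape_short hQQ (zE ⟨i, h⟩)
          ((zmem _).mp (zE_mem _)).1 ((zmem _).mp (zE_mem _)).2
        refine ⟨wk, h1, h2', fun v hv => ?_⟩
        rcases h3 v hv with h4|h4|h4
        · exact Or.inl h4
        · exact Or.inr (Or.inl h4)
        · refine Or.inr (Or.inr ?_)
          simp only [hS, dif_pos h, Set.mem_singleton_iff]
          exact h4
      · obtain ⟨wk, h1, h2', h3⟩ := shape_special hQQ cQ' hp1' ys ys' x
          hysV hys1 hys'V' hys'1 hBC hx0 hx1 hxt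
        refine ⟨wk, h1, h2', fun v hv => ?_⟩
        rcases h3 v hv with h4|h4|h4|h4|h4|h4
        · exact Or.inl h4
        · exact Or.inr (Or.inl h4)
        all_goals refine Or.inr (Or.inr ?_)
        all_goals simp only [hS, dif_neg h, Set.mem_union, Set.mem_insert_iff,
          Set.mem_singleton_iff, Set.mem_setOf_eq]
        · exact Or.inl (Or.inl h4)
        · exact Or.inl (Or.inr (Or.inl h4))
        · exact Or.inl (Or.inr (Or.inr h4))
        · exact Or.inr h4
    choose p hp using ex
    refine ⟨p, fun i => ⟨(hp i).1, (hp i).2.1⟩, ?_⟩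
    apply pid_of_subsets S (fun i => (hp i).2.2)
    intro i i' v hvi hvi' hvs hvt
    have him := i.isLt
    have him' := i'.isLt
    by_cases h : (i : ℕ) < r <;> by_cases h' : (i' : ℕ) < r
    · simp only [hS, dif_pos h, dif_pos h', Set.mem_singleton_iff] at hvi hvi'
      have h6 := zE_inj (Sum.inl.inj (hvi.symm.trans hvi'))
      exact Fin.ext (by simpa using congrArg Fin.val h6)
    · exfalso
      simp only [hS, dif_pos h, Set.mem_singleton_iff] at hvi
      have hzEZ := zE_mem (⟨(i : ℕ), h⟩ : Fin r)
      simp only [hS, dif_neg h', Set.mem_union, Set.mem_insert_iff,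
        Set.mem_singleton_iff, Set.mem_setOf_eq] at hvi'
      rcases hvi' with (h5|h5|h5)|⟨c,hc⟩
      · exact hysZ ((Sum.inl.inj (hvi.symm.trans h5)) ▸ hzEZ)
      · exact hys'Z ((Sum.inl.inj (hvi.symm.trans h5)) ▸ hzEZ)
      · exact hxt ((Sum.inl.inj (hvi.symm.trans h5)) ▸ ((zmem _).mp hzEZ).2)
      · rw [hvi] at hc; exact absurd hc (by simp)
    · exfalso
      simp only [hS, dif_pos h', Set.mem_singleton_iff] at hvi'
      have hzEZ := zE_mem (⟨(i' : ℕ), h'⟩ : Fin r)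
      simp only [hS, dif_neg h, Set.mem_union, Set.mem_insert_iff,
        Set.mem_singleton_iff, Set.mem_setOf_eq] at hvi
      rcases hvi with (h5|h5|h5)|⟨c,hc⟩
      · exact hysZ ((Sum.inl.inj (hvi'.symm.trans h5)) ▸ hzEZ)
      · exact hys'Z ((Sum.inl.inj (hvi'.symm.trans h5)) ▸ hzEZ)
      · exact hxt ((Sum.inl.inj (hvi'.symm.trans h5)) ▸ ((zmem _).mp hzEZ).2)
      · rw [hvi'] at hc; exact absurd hc (by simp)
    · exact Fin.ext (by omega)
end

section
/- Let T be any [Δ,k]-transversal design where k, Δ ≥ 2 and Δ ≤ k. Let a, b ≥ 0 with a + b = Δ_0 ≤ Δ. Suppose that we are given a multiset of a nodes of T (the target-nodes) and a multiset of b blocks of T (the target-blocks), where there may be repetitions among the target-nodes and target-blocks. Suppose that D_0 is a group of nodes of T that contains no target-node. Then there exists a set S of Δ_0 distinct nodes of D_0 together with Δ_0 pairwise internally-disjoint paths in T, each of length at most 3, such that each node of S is the source of exactly one of the paths and the destinations of the paths are exactly the target-nodes and target-blocks (with multiplicity). -/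
private lemma bip_adj {ν β : Type} {adj : ν → β → Prop} {x : ν} {c : β} (h : adj x c) :
    (bipGraph adj).Adj (Sum.inl x) (Sum.inr c) := by
  rw [bipGraph, SimpleGraph.fromRel_adj]
  exact ⟨by simp, Or.inl ⟨x, c, rfl, rfl, h⟩⟩

/-- Let `T` be a `[Δ,k]`-transversal design with `Δ ≤ k`.  Let
`a + b ≤ Δ` and suppose we are given `a` target-nodes `tn` and `b` target-blocks
`tb` (possibly with repetitions), the targets being enumerated by
`tgt : Fin (a + b) → ν ⊕ β`.  Suppose the group `D_0` (the fibre of the group index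
`i0`) contains no target-node.  Then there are `a + b` distinct nodes `s j` of
`D_0` and `a + b` pairwise internally-disjoint paths, each of length at most `3`,
whose sources are the nodes `s j` and whose destinations are exactly the
target-nodes and target-blocks (with multiplicity). -/
theorem transversalDesign_many_to_many {ν β : Type} (Δ k a b : ℕ)
    (hΔk : Δ ≤ k) (hab : a + b ≤ Δ)
    (group : ν → Fin Δ) (adj : ν → β → Prop)
    (hT : IsTransversalDesign Δ k group adj)
    (tn : Fin a → ν) (tb : Fin b → β)
    (tgt : Fin (a + b) → ν ⊕ β)
    (htgt1 : ∀ j : Fin a, tgt (Fin.castAdd b j) = Sum.inl (tn j))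
    (htgt2 : ∀ j : Fin b, tgt (Fin.natAdd a j) = Sum.inr (tb j))
    (i0 : Fin Δ) (hi0 : ∀ j : Fin a, group (tn j) ≠ i0) :
    ∃ s : Fin (a + b) → ν, Function.Injective s ∧ (∀ j, group (s j) = i0) ∧
      ∃ p : (j : Fin (a + b)) → (bipGraph adj).Walk (Sum.inl (s j)) (tgt j),
        (∀ j, (p j).IsPath ∧ (p j).length ≤ 3) ∧ PairwiseInternallyDisjoint p := by
  classical
  obtain ⟨h2k, h2Δ, hGC, hBC, hBM, hPG⟩ := hT
  -- ν is finite
  have hνF : Finite ν := by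
    have h1 : ∀ i : Fin Δ, Finite {x : ν // group x = i} := fun i =>
      Nat.finite_of_card_ne_zero (by rw [hGC i]; omega)
    exact Finite.of_injective
      (fun x : ν => (⟨group x, x, rfl⟩ : Σ i : Fin Δ, {y : ν // group y = i}))
      (fun x y h => congrArg (fun s : (Σ i : Fin Δ, {y : ν // group y = i}) => s.2.1) h)
  obtain ⟨hνinst⟩ := nonempty_fintype ν
  -- choose the canonical nodes and blocks
  choose nn hnn using fun c => hBM c i0
  choose yy hyy using fun (g : Fin Δ) (c : β) => hBM c g
  choose gen hgen using hPG
  set NF : Finset ν := Finset.image (fun l : Fin b => nn (tb l)) Finset.univ with hNFdef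
  have hmemNF : ∀ l : Fin b, nn (tb l) ∈ NF := fun l =>
    Finset.mem_image_of_mem _ (Finset.mem_univ l)
  have hNFgrp : ∀ x ∈ NF, group x = i0 := by
    intro x hx
    simp only [hNFdef, Finset.mem_image, Finset.mem_univ, true_and] at hx
    obtain ⟨l, rfl⟩ := hx
    exact (hnn (tb l)).1.1
  have LU : ∀ (c : β) (x x' : ν), group x = i0 → group x' = i0 → adj x c → adj x' c →
      x = x' := by
    intro c x x' h1 h2 h3 h4
    rw [(hnn c).2 x ⟨h1, h3⟩, (hnn c).2 x' ⟨h2, h4⟩]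
  have LA : ∀ (c : β) (x : ν) (l : Fin b), group x = i0 → x ∉ NF → adj x c → c ≠ tb l := by
    intro c x l h1 h2 h3 heq
    apply h2
    subst heq
    rw [(hnn (tb l)).2 x ⟨h1, h3⟩]
    exact hmemNF l
  -- directness
  set direct : Fin b → Prop := fun jb => ∀ l : Fin b, nn (tb l) = nn (tb jb) → jb ≤ l
    with hdirdef
  have d1 : ∀ jb jb' : Fin b, direct jb → direct jb' → nn (tb jb) = nn (tb jb') →
      jb = jb' := by
    intro jb jb' h h' he
    exact le_antisymm (h jb' he.symm) (h' jb he)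
  have d2 : ∀ jb : Fin b, ∃ jb', direct jb' ∧ nn (tb jb') = nn (tb jb) := by
    intro jb
    set S : Finset (Fin b) := Finset.univ.filter (fun l => nn (tb l) = nn (tb jb)) with hSdef
    have hjbS : jb ∈ S := by simp [hSdef]
    have hne : S.Nonempty := ⟨jb, hjbS⟩
    have hminS := S.min'_mem hne
    have hmineq : nn (tb (S.min' hne)) = nn (tb jb) := by simpa [hSdef] using hminS
    refine ⟨S.min' hne, ?_, hmineq⟩
    intro l hl
    exact S.min'_le l (by simp [hSdef, hl.trans hmineq])
  -- counting
  have hNFcard_le : NF.card ≤ b := le_trans Finset.card_image_le (by simp)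
  have hDirCard : (Finset.univ.filter direct).card = NF.card := by
    refine Finset.card_bij (fun jb _ => nn (tb jb)) ?_ ?_ ?_
    · intro jb _; exact hmemNF jb
    · intro jb hjb jb' hjb' he
      exact d1 jb jb' (by simpa using hjb) (by simpa using hjb') he
    · intro v hv
      simp only [hNFdef, Finset.mem_image, Finset.mem_univ, true_and] at hv
      obtain ⟨l, rfl⟩ := hv
      obtain ⟨jb', hd', he'⟩ := d2 l
      exact ⟨jb', by simpa using hd', he'⟩
  have hsplit := Finset.card_filter_add_card_filter_not
    (s := (Finset.univ : Finset (Fin b))) (p := direct)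
  have hunivb : (Finset.univ : Finset (Fin b)).card = b := by simp
  have hIndCard : (Finset.univ.filter (fun jb => ¬ direct jb)).card = b - NF.card := by
    omega
  have hIndTypeCard : Fintype.card {jb : Fin b // ¬ direct jb} = b - NF.card := by
    rw [Fintype.card_subtype]
    exact hIndCard
  have hD0card : (Finset.univ.filter (fun x : ν => group x = i0)).card = k := by
    rw [← Fintype.card_subtype, ← Nat.card_eq_fintype_card]
    exact hGC i0
  have hT1card : Fintype.card {x : ν // group x = i0 ∧ x ∉ NF} = k - NF.card := by
    rw [Fintype.card_subtype]
    have hsub : NF ⊆ Finset.univ.filter (fun x : ν => group x = i0) := by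
      intro x hx
      simp only [Finset.mem_filter, Finset.mem_univ, true_and]
      exact hNFgrp x hx
    have heq : Finset.univ.filter (fun x : ν => group x = i0 ∧ x ∉ NF)
        = (Finset.univ.filter (fun x : ν => group x = i0)) \ NF := by
      ext x
      simp [Finset.mem_sdiff]
    rw [heq, Finset.card_sdiff_of_subset hsub, hD0card]
  obtain ⟨e1⟩ : Nonempty ((Fin a ⊕ {jb : Fin b // ¬ direct jb}) ↪
      {x : ν // group x = i0 ∧ x ∉ NF}) := by
    apply Function.Embedding.nonempty_of_card_le
    rw [Fintype.card_sum, Fintype.card_fin, hIndTypeCard, hT1card]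
    omega
  set SG : Finset (Fin Δ) :=
    insert i0 (Finset.image (fun l : Fin a => group (tn l)) Finset.univ) with hSGdef
  have hSGcard : SG.card ≤ a + 1 := by
    have h1 : (Finset.image (fun l : Fin a => group (tn l)) Finset.univ).card ≤ a :=
      le_trans Finset.card_image_le (by simp)
    exact le_trans (Finset.card_insert_le _ _) (by omega)
  have hT2card : Fintype.card {g : Fin Δ // g ∉ SG} = Δ - SG.card := by
    rw [Fintype.card_subtype]
    have heq : Finset.univ.filter (fun g : Fin Δ => g ∉ SG) = SGᶜ := by
      ext g; simp
    rw [heq, Finset.card_compl, Fintype.card_fin]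
  obtain ⟨e2⟩ : Nonempty ({jb : Fin b // ¬ direct jb} ↪ {g : Fin Δ // g ∉ SG}) := by
    apply Function.Embedding.nonempty_of_card_le
    rw [hIndTypeCard, hT2card]
    rcases Nat.eq_zero_or_pos b with hb | hb
    · omega
    · have h1 : 1 ≤ NF.card := Finset.card_pos.mpr ⟨_, hmemNF ⟨0, hb⟩⟩
      omega
  -- group selector for indirect paths
  set gsel : Fin b → Fin Δ := fun jb => if h : direct jb then i0 else (e2 ⟨jb, h⟩).1
    with hgseldef
  have hgselSG : ∀ (jb : Fin b) (h : ¬ direct jb), gsel jb ∉ SG := by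
    intro jb h
    simp only [hgseldef, dif_neg h]
    exact (e2 ⟨jb, h⟩).2
  have hgsel1 : ∀ jb : Fin b, ¬ direct jb → gsel jb ≠ i0 := by
    intro jb h heq
    exact hgselSG jb h (by rw [heq, hSGdef]; exact Finset.mem_insert_self i0 _)
  have hgsel2 : ∀ (jb : Fin b) (l : Fin a), ¬ direct jb → gsel jb ≠ group (tn l) := by
    intro jb l h heq
    refine hgselSG jb h ?_
    rw [heq, hSGdef]
    exact Finset.mem_insert_of_mem (Finset.mem_image_of_mem _ (Finset.mem_univ l))
  have hgsel3 : ∀ jb jb' : Fin b, ¬ direct jb → ¬ direct jb' → gsel jb = gsel jb' →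
      jb = jb' := by
    intro jb jb' h h' heq
    simp only [hgseldef, dif_neg h, dif_neg h'] at heq
    exact congrArg Subtype.val (e2.injective (Subtype.ext heq))
  -- the sources
  set σ : Fin (a + b) → ν := Fin.addCases (motive := fun _ => ν)
      (fun ja => (e1 (Sum.inl ja)).1)
      (fun jb => if h : direct jb then nn (tb jb) else (e1 (Sum.inr ⟨jb, h⟩)).1) with hσdef
  have hσL : ∀ ja : Fin a, σ (Fin.castAdd b ja) = (e1 (Sum.inl ja)).1 := by
    intro ja
    simp only [hσdef]
    rw [Fin.addCases_left]
  have hσRd : ∀ (jb : Fin b), direct jb → σ (Fin.natAdd a jb) = nn (tb jb) := by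
    intro jb h
    simp only [hσdef]
    rw [Fin.addCases_right]
    exact dif_pos h
  have hσRi : ∀ (jb : Fin b) (h : ¬ direct jb),
      σ (Fin.natAdd a jb) = (e1 (Sum.inr ⟨jb, h⟩)).1 := by
    intro jb h
    simp only [hσdef]
    rw [Fin.addCases_right]
    exact dif_neg h
  have hCN : ∀ (ja : Fin a) (jb : Fin b), Fin.castAdd b ja ≠ Fin.natAdd a jb := by
    intro ja jb h
    have h1 := congrArg Fin.val h
    simp only [Fin.coe_castAdd, Fin.coe_natAdd] at h1
    have h2 := ja.isLt
    omega
  have hNinj : ∀ jb jb' : Fin b, Fin.natAdd a jb = Fin.natAdd a jb' → jb = jb' := by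
    intro jb jb' h
    have h1 := congrArg Fin.val h
    simp only [Fin.coe_natAdd] at h1
    exact Fin.ext (by omega)
  have hσgrp : ∀ j, group (σ j) = i0 := by
    intro j
    refine Fin.addCases (motive := fun j => group (σ j) = i0) ?_ ?_ j
    · intro ja
      rw [hσL]
      exact (e1 (Sum.inl ja)).2.1
    · intro jb
      by_cases h : direct jb
      · rw [hσRd jb h]
        exact (hnn (tb jb)).1.1
      · rw [hσRi jb h]
        exact (e1 (Sum.inr ⟨jb, h⟩)).2.1
  have hσnot : ∀ j : Fin (a + b), (∀ jb : Fin b, j = Fin.natAdd a jb → ¬ direct jb) →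
      σ j ∉ NF := by
    refine fun j => Fin.addCases
      (motive := fun j => (∀ jb : Fin b, j = Fin.natAdd a jb → ¬ direct jb) → σ j ∉ NF)
      ?_ ?_ j
    · intro ja _
      rw [hσL]
      exact (e1 (Sum.inl ja)).2.2
    · intro jb hj
      have h : ¬ direct jb := hj jb rfl
      rw [hσRi jb h]
      exact (e1 (Sum.inr ⟨jb, h⟩)).2.2
  have hσnotL : ∀ ja : Fin a, σ (Fin.castAdd b ja) ∉ NF := fun ja =>
    hσnot _ (fun jb h => absurd h (hCN ja jb))
  have hσinj : Function.Injective σ := by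
    intro j1 j2
    refine Fin.addCases (motive := fun j1 => σ j1 = σ j2 → j1 = j2) ?_ ?_ j1
    · intro ja
      refine Fin.addCases
        (motive := fun j2 => σ (Fin.castAdd b ja) = σ j2 → Fin.castAdd b ja = j2) ?_ ?_ j2
      · intro ja' heq
        rw [hσL, hσL] at heq
        have h1 := e1.injective (Subtype.ext heq)
        simp only [Sum.inl.injEq] at h1
        rw [h1]
      · intro jb heq
        by_cases h : direct jb
        · rw [hσL, hσRd jb h] at heq
          exact absurd (by rw [hσL, heq]; exact hmemNF jb) (hσnotL ja)
        · rw [hσL, hσRi jb h] at heq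
          exact absurd (e1.injective (Subtype.ext heq)) (by simp)
    · intro jb
      refine Fin.addCases
        (motive := fun j2 => σ (Fin.natAdd a jb) = σ j2 → Fin.natAdd a jb = j2) ?_ ?_ j2
      · intro ja heq
        by_cases h : direct jb
        · rw [hσRd jb h, hσL] at heq
          exact absurd (by rw [hσL, ← heq]; exact hmemNF jb) (hσnotL ja)
        · rw [hσRi jb h, hσL] at heq
          exact absurd (e1.injective (Subtype.ext heq)) (by simp)
      · intro jb' heq
        by_cases h : direct jb <;> by_cases h' : direct jb'
        · rw [hσRd jb h, hσRd jb' h'] at heq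
          rw [d1 jb jb' h h' heq]
        · rw [hσRd jb h, hσRi jb' h'] at heq
          exact absurd (by rw [← heq]; exact hmemNF jb) (e1 (Sum.inr ⟨jb', h'⟩)).2.2
        · rw [hσRi jb h, hσRd jb' h'] at heq
          exact absurd (by rw [heq]; exact hmemNF jb') (e1 (Sum.inr ⟨jb, h⟩)).2.2
        · rw [hσRi jb h, hσRi jb' h'] at heq
          have h1 := e1.injective (Subtype.ext heq)
          simp only [Sum.inr.injEq, Subtype.mk.injEq] at h1
          rw [h1]
  have htgtCases : ∀ j : Fin (a + b),
      (∃ ja, j = Fin.castAdd b ja ∧ tgt j = Sum.inl (tn ja)) ∨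
      (∃ jb, j = Fin.natAdd a jb ∧ tgt j = Sum.inr (tb jb)) := by
    refine fun j => Fin.addCases
      (motive := fun j => (∃ ja, j = Fin.castAdd b ja ∧ tgt j = Sum.inl (tn ja)) ∨
        (∃ jb, j = Fin.natAdd a jb ∧ tgt j = Sum.inr (tb jb))) ?_ ?_ j
    · intro ja
      exact Or.inl ⟨ja, rfl, htgt1 ja⟩
    · intro jb
      exact Or.inr ⟨jb, rfl, htgt2 jb⟩
  -- the walks
  have hwalk : ∀ j : Fin (a + b), ∃ w : (bipGraph adj).Walk (Sum.inl (σ j)) (tgt j),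
      w.IsPath ∧ w.length ≤ 3 ∧
      ((∃ ja, j = Fin.castAdd b ja ∧ ∃ C : β, adj (σ j) C ∧
          w.support = [Sum.inl (σ j), Sum.inr C, Sum.inl (tn ja)]) ∨
       (∃ jb, j = Fin.natAdd a jb ∧ w.support = [Sum.inl (σ j), Sum.inr (tb jb)]) ∨
       (∃ jb, j = Fin.natAdd a jb ∧ ¬ direct jb ∧ ∃ (C : β) (y : ν), adj (σ j) C ∧
          group y = gsel jb ∧
          w.support = [Sum.inl (σ j), Sum.inr C, Sum.inl y, Sum.inr (tb jb)])) := by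
    refine fun j => Fin.addCases
      (motive := fun j => ∃ w : (bipGraph adj).Walk (Sum.inl (σ j)) (tgt j),
        w.IsPath ∧ w.length ≤ 3 ∧
        ((∃ ja, j = Fin.castAdd b ja ∧ ∃ C : β, adj (σ j) C ∧
            w.support = [Sum.inl (σ j), Sum.inr C, Sum.inl (tn ja)]) ∨
         (∃ jb, j = Fin.natAdd a jb ∧ w.support = [Sum.inl (σ j), Sum.inr (tb jb)]) ∨
         (∃ jb, j = Fin.natAdd a jb ∧ ¬ direct jb ∧ ∃ (C : β) (y : ν), adj (σ j) C ∧
            group y = gsel jb ∧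
            w.support = [Sum.inl (σ j), Sum.inr C, Sum.inl y, Sum.inr (tb jb)]))) ?_ ?_ j
    · intro ja
      rw [htgt1 ja]
      have hne : group (σ (Fin.castAdd b ja)) ≠ group (tn ja) := by
        rw [hσgrp]
        exact fun hcontra => hi0 ja hcontra.symm
      obtain ⟨⟨hC1, hC2⟩, -⟩ := hgen _ _ hne
      have hsne : σ (Fin.castAdd b ja) ≠ tn ja := fun h => hne (by rw [h])
      refine ⟨SimpleGraph.Walk.cons (bip_adj hC1)
        (SimpleGraph.Walk.cons (bip_adj hC2).symm SimpleGraph.Walk.nil), ?_, ?_, ?_⟩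
      · rw [SimpleGraph.Walk.isPath_def]
        simp [hsne]
      · simp
      · exact Or.inl ⟨ja, rfl, _, hC1, rfl⟩
    · intro jb
      rw [htgt2 jb]
      by_cases hd : direct jb
      · rw [hσRd jb hd]
        refine ⟨SimpleGraph.Walk.cons (bip_adj (hnn (tb jb)).1.2) SimpleGraph.Walk.nil,
          ?_, ?_, ?_⟩
        · rw [SimpleGraph.Walk.isPath_def]
          simp
        · simp
        · exact Or.inr (Or.inl ⟨jb, rfl, rfl⟩)
      · obtain ⟨⟨hy1, hy2⟩, -⟩ := hyy (gsel jb) (tb jb)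
        have hsg : group (σ (Fin.natAdd a jb)) ≠ group (yy (gsel jb) (tb jb)) := by
          rw [hσgrp, hy1]
          exact fun h => hgsel1 jb hd h.symm
        obtain ⟨⟨hC1, hC2⟩, -⟩ := hgen _ _ hsg
        have hsnot : σ (Fin.natAdd a jb) ∉ NF := hσnot _ (fun jb' hjj => by
          rw [← hNinj jb jb' hjj]
          exact hd)
        have hCne : gen _ _ hsg ≠ tb jb := LA _ _ jb (hσgrp _) hsnot hC1
        have hsy : σ (Fin.natAdd a jb) ≠ yy (gsel jb) (tb jb) := fun h => hsg (by rw [h])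
        refine ⟨SimpleGraph.Walk.cons (bip_adj hC1) (SimpleGraph.Walk.cons (bip_adj hC2).symm
          (SimpleGraph.Walk.cons (bip_adj hy2) SimpleGraph.Walk.nil)), ?_, ?_, ?_⟩
        · rw [SimpleGraph.Walk.isPath_def]
          simp [hsy, hCne]
        · simp
        · exact Or.inr (Or.inr ⟨jb, rfl, hd, _, _, hC1, hy1, rfl⟩)
  choose p hp using hwalk
  -- characterization of internal vertices
  have hIntChar : ∀ (i : Fin (a + b)) (v : ν ⊕ β), v ∈ (p i).support →
      v ≠ Sum.inl (σ i) → v ≠ tgt i →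
      (∃ C : β, adj (σ i) C ∧ σ i ∉ NF ∧ v = Sum.inr C) ∨
      (∃ (jb : Fin b) (y : ν), i = Fin.natAdd a jb ∧ ¬ direct jb ∧ group y = gsel jb ∧
        v = Sum.inl y) := by
    intro i v hv h1 h2
    rcases (hp i).2.2 with ⟨ja, hje, C, hC, hsupp⟩ | ⟨jb, hje, hsupp⟩ |
      ⟨jb, hje, hd, C, y, hC, hgy, hsupp⟩
    · have hnotNF : σ i ∉ NF := by
        rw [hje]
        exact hσnotL ja
      rw [hsupp] at hv
      simp only [List.mem_cons, List.not_mem_nil, or_false] at hv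
      rcases hv with hv | hv | hv
      · exact absurd hv h1
      · exact Or.inl ⟨C, hC, hnotNF, hv⟩
      · rw [hje, htgt1 ja] at h2
        exact absurd hv h2
    · rw [hsupp] at hv
      simp only [List.mem_cons, List.not_mem_nil, or_false] at hv
      rw [hje, htgt2 jb] at h2
      rcases hv with hv | hv
      · exact absurd hv h1
      · exact absurd hv h2
    · have hnotNF : σ i ∉ NF := by
        rw [hje]
        exact hσnot _ (fun jb' hjj => by rw [← hNinj jb jb' hjj]; exact hd)
      rw [hsupp] at hv
      simp only [List.mem_cons, List.not_mem_nil, or_false] at hv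
      rw [hje, htgt2 jb] at h2
      rcases hv with hv | hv | hv | hv
      · exact absurd hv h1
      · exact Or.inl ⟨C, hC, hnotNF, hv⟩
      · exact Or.inr ⟨jb, y, hje, hd, hgy, hv⟩
      · exact absurd hv h2
  have hM2 : ∀ (i : Fin (a + b)) (v : ν ⊕ β), v ∈ (p i).support →
      v ≠ Sum.inl (σ i) → v ≠ tgt i → ∀ j, v ≠ Sum.inl (σ j) ∧ v ≠ tgt j := by
    intro i v hv h1 h2 j
    rcases hIntChar i v hv h1 h2 with ⟨C, hC, hnotNF, rfl⟩ | ⟨jb, y, hje, hd, hgy, rfl⟩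
    · refine ⟨by simp, ?_⟩
      rcases htgtCases j with ⟨ja', -, hjt⟩ | ⟨jb', -, hjt⟩
      · rw [hjt]
        simp
      · rw [hjt]
        intro hcon
        have hCeq : C = tb jb' := by
          simpa using hcon
        exact LA C (σ i) jb' (hσgrp i) hnotNF hC hCeq
    · constructor
      · intro hcon
        have hyeq : y = σ j := by simpa using hcon
        exact hgsel1 jb hd (by rw [← hgy, hyeq, hσgrp j])
      · rcases htgtCases j with ⟨ja', -, hjt⟩ | ⟨jb', -, hjt⟩
        · rw [hjt]
          intro hcon
          have hyeq : y = tn ja' := by simpa using hcon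
          exact hgsel2 jb ja' hd (by rw [← hgy, hyeq])
        · rw [hjt]
          simp
  have hM3 : ∀ (i j : Fin (a + b)) (v : ν ⊕ β), v ∈ (p i).support →
      v ≠ Sum.inl (σ i) → v ≠ tgt i → v ∈ (p j).support →
      v ≠ Sum.inl (σ j) → v ≠ tgt j → i = j := by
    intro i j v hvi hi1 hi2 hvj hj1 hj2
    rcases hIntChar i v hvi hi1 hi2 with ⟨C, hC, -, rfl⟩ | ⟨jb, y, hje, hd, hgy, rfl⟩
    · rcases hIntChar j _ hvj hj1 hj2 with ⟨C', hC', -, heq⟩ | ⟨_, y', _, _, _, heq⟩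
      · have hCeq : C' = C := by simpa using heq.symm
        rw [hCeq] at hC'
        exact hσinj (LU C (σ i) (σ j) (hσgrp i) (hσgrp j) hC hC')
      · exact absurd heq (by simp)
    · rcases hIntChar j _ hvj hj1 hj2 with ⟨C', -, -, heq⟩ | ⟨jb', y', hje', hd', hgy', heq⟩
      · exact absurd heq (by simp)
      · have hyeq : y' = y := by simpa using heq.symm
        rw [hyeq] at hgy'
        have hjbeq : jb = jb' := hgsel3 jb jb' hd hd' (by rw [← hgy, hgy'])
        rw [hje, hje', hjbeq]
  refine ⟨σ, hσinj, hσgrp, p, fun j => ⟨(hp j).1, (hp j).2.1⟩, ?_, ?_⟩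
  · intro i j v hv hvj
    by_cases hc1 : v = Sum.inl (σ i)
    · exact Or.inl hc1
    by_cases hc2 : v = tgt i
    · exact Or.inr hc2
    have hm := hM2 i v hv hc1 hc2 j
    rcases hvj with hvj | hvj
    · exact absurd hvj hm.1
    · exact absurd hvj hm.2
  · intro i j v hall hvi hvj
    exact hM3 i j v hvi (hall i).1 (hall i).2 hvj (hall j).1 (hall j).2
end
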